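/- arXiv:2204.00058 — 6 statements merged into one kernel-verified Lean document; each statement's English description precedes it below -/
import Mathlib

section
/- Let 1 ≤ p2 ≤ ∞ and let p be defined by 1/p = 1/2 + 1/p2. Then there is no finite constant C such that the weak-type bound ‖S²(f,g)‖_{L^{p,∞}(ℝ)} ≤ C ‖f‖_{L^2(ℝ)} ‖g‖_{L^{p2}(ℝ)} holds for all f ∈ L^2(ℝ) and g ∈ L^{p2}(ℝ). -/
/-!
Take `f y = (√y (2 - log y))⁻¹` on `(0, 1)` and `g` the indicator of `[0, 1]`. Since `f²` is
the derivative of the increasing function `(2 - log y)⁻¹`, which maps `(0, 1)` into `(0, 1)`,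
`‖f‖₂ ≤ 1`, while `g` lies in every `Lᵖ`. For `x, θ ∈ (0, 1)` and `t = x`, the point
`x - x cos θ` lies in `(0, θ²]` and `x - x sin θ` in `[0, 1]`; as `s ↦ s (1 - log s)`
increases on `(0, 1]`, this gives `f (x - x cos θ) ≥ (2 θ (1 - log θ))⁻¹`. The right-hand side
is the derivative of `-log (1 - log θ) / 2`, which is unbounded as `θ → 0`, so it is not
integrable, `S²(f, g) = ∞` on `(0, 1)`, and the weak `L^p` quasinorm is infinite for every `p`.
-/

open MeasureTheory Real Set
open scoped ENNReal NNReal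

/-- The bilinear spherical maximal function in dimension one:
`S²(f,g)(x) = sup_{t>0} (2π)⁻¹ ∫_0^{2π} |f(x - t cos θ)| |g(x - t sin θ)| dθ`. -/
noncomputable def S2 (f g : ℝ → ℝ) (x : ℝ) : ℝ≥0∞ :=
  ⨆ (t : ℝ) (_ : 0 < t),
    (ENNReal.ofReal (2 * π))⁻¹ *
      ∫⁻ θ in Set.Ioc (0 : ℝ) (2 * π),
        ENNReal.ofReal (|f (x - t * Real.cos θ)| * |g (x - t * Real.sin θ)|)

/-- The normalized surface measure on the unit sphere `S^{m-1} ⊆ ℝ^m`. -/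
noncomputable def sphMeasure (m : ℕ) :
    Measure (Metric.sphere (0 : EuclideanSpace ℝ (Fin m)) 1) :=
  ((volume : Measure (EuclideanSpace ℝ (Fin m))).toSphere Set.univ)⁻¹ •
    (volume : Measure (EuclideanSpace ℝ (Fin m))).toSphere

/-- The multilinear spherical average
`S^m_t(|f₁|,…,|f_m|)(x) = ∫_{S^{m-1}} ∏ |f_i(x - t y_i)| dσ_{m-1}(y)`. -/
noncomputable def sphAvg (m : ℕ) (f : Fin m → ℝ → ℝ) (t x : ℝ) : ℝ≥0∞ :=
  ∫⁻ y : Metric.sphere (0 : EuclideanSpace ℝ (Fin m)) 1,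
    ∏ i, ENNReal.ofReal |f i (x - t * (y : EuclideanSpace ℝ (Fin m)) i)| ∂(sphMeasure m)

/-- The multilinear spherical maximal function `S^m(f₁,…,f_m)(x) = sup_{t>0} S^m_t(|f₁|,…,|f_m|)(x)`. -/
noncomputable def Sm (m : ℕ) (f : Fin m → ℝ → ℝ) (x : ℝ) : ℝ≥0∞ :=
  ⨆ (t : ℝ) (_ : 0 < t), sphAvg m f t x

/-- The `L^p(ℝ)` norm of an `ℝ≥0∞`-valued function. -/
noncomputable def lpNorm (p : ℝ≥0∞) (F : ℝ → ℝ≥0∞) : ℝ≥0∞ :=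
  if p = ∞ then essSup F volume
  else (∫⁻ x, F x ^ p.toReal) ^ (1 / p.toReal)

/-- The weak `L^{p,∞}(ℝ)` quasinorm of an `ℝ≥0∞`-valued function. -/
noncomputable def wLpNorm (p : ℝ≥0∞) (F : ℝ → ℝ≥0∞) : ℝ≥0∞ :=
  ⨆ (l : ℝ≥0∞) (_ : 0 < l), l * (volume {x | l < F x}) ^ (1 / p.toReal)

/-- The `k`-linear Hardy–Littlewood maximal function
`M^k(g₁,…,g_k)(x) = sup_{t>0} ∫_{B^k(0,1)} ∏ |g_i(x - t y_i)| dy`. -/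
noncomputable def Mk (k : ℕ) (g : Fin k → ℝ → ℝ) (x : ℝ) : ℝ≥0∞ :=
  ⨆ (t : ℝ) (_ : 0 < t),
    ∫⁻ y in Metric.ball (0 : EuclideanSpace ℝ (Fin k)) 1,
      ∏ i, ENNReal.ofReal |g i (x - t * y i)| ∂volume


lemma mul_one_sub_log_le_mul_one_sub_log {s r : ℝ} (hs : 0 < s) (hsr : s ≤ r) (hr : r ≤ 1) :
    s * (1 - log s) ≤ r * (1 - log r) := by
  have hr0 : 0 < r := hs.trans_le hsr
  have hlog : 1 - r / s ≤ log s - log r := by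
    simpa [log_div hs.ne' hr0.ne'] using one_sub_inv_le_log_of_pos (div_pos hs hr0)
  have hscaled : s - r ≤ s * (log s - log r) := by
    have := mul_le_mul_of_nonneg_left hlog hs.le
    rwa [mul_one_sub, mul_div_cancel₀ _ hs.ne'] at this
  nlinarith [mul_nonneg (sub_nonneg.2 hsr) (neg_nonneg.2 (log_nonpos hr0.le hr))]

noncomputable def sqrtLogSingularity : ℝ → ℝ :=
  (Ioo 0 1).indicator fun y => (√y * (2 - log y))⁻¹

lemma measurable_sqrtLogSingularity : Measurable sqrtLogSingularity :=
  Measurable.indicator (by fun_prop) measurableSet_Ioo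

lemma hasDerivAt_inv_two_sub_log {y : ℝ} (hy : 0 < y) (hlog : log y ≠ 2) :
    HasDerivAt (fun y => (2 - log y)⁻¹) ((y * (2 - log y) ^ 2)⁻¹) y := by
  have hne : 2 - log y ≠ 0 := sub_ne_zero.2 hlog.symm
  refine (((hasDerivAt_log hy.ne').const_sub 2).inv hne).congr_deriv ?_
  field_simp

lemma sqrtLogSingularity_sq (y : ℝ) :
    sqrtLogSingularity y ^ 2 = (Ioo 0 1).indicator (fun y => (y * (2 - log y) ^ 2)⁻¹) y := by
  by_cases hy : y ∈ Ioo 0 1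
  · simp only [sqrtLogSingularity, indicator_of_mem hy, inv_pow, mul_pow, sq_sqrt hy.1.le]
  · simp [sqrtLogSingularity, indicator_of_notMem hy]

lemma memLp_two_sqrtLogSingularity : MemLp sqrtLogSingularity 2 volume := by
  refine (memLp_two_iff_integrable_sq measurable_sqrtLogSingularity.aestronglyMeasurable).2 ?_
  simp only [sqrtLogSingularity_sq]
  rw [integrable_indicator_iff measurableSet_Ioo]
  have hderiv : ∀ y ∈ Ioo (0 : ℝ) 1,
      HasDerivWithinAt (fun y => (2 - log y)⁻¹) ((y * (2 - log y) ^ 2)⁻¹) (Ioo 0 1) y :=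
    fun y hy =>
      (hasDerivAt_inv_two_sub_log hy.1 (by linarith [log_neg hy.1 hy.2])).hasDerivWithinAt
  have hmono : MonotoneOn (fun y => (2 - log y)⁻¹) (Ioo (0 : ℝ) 1) := by
    intro a ha b hb hab
    have := log_le_log ha.1 hab
    have := log_neg hb.1 hb.2
    exact inv_anti₀ (by linarith) (by linarith)
  have himage : (fun y => (2 - log y)⁻¹) '' Ioo (0 : ℝ) 1 ⊆ Ioo 0 1 := by
    rintro _ ⟨y, hy, rfl⟩
    have := log_neg hy.1 hy.2
    exact ⟨inv_pos.2 (by linarith), inv_lt_one_of_one_lt₀ (by linarith)⟩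
  have := (integrableOn_image_iff_integrableOn_deriv_smul_of_monotoneOn measurableSet_Ioo hderiv
    hmono 1).1 ((integrableOn_const measure_Ioo_lt_top.ne (C := (1 : ℝ))).mono_set himage)
  simpa using this

lemma lintegral_inv_mul_one_sub_log_eq_top :
    ∫⁻ θ in Ioo (0 : ℝ) 1, ENNReal.ofReal (θ * (1 - log θ))⁻¹ = ∞ := by
  have hderiv : ∀ θ ∈ Ioo (0 : ℝ) 1,
      HasDerivWithinAt (fun θ => -log (1 - log θ)) (θ * (1 - log θ))⁻¹ (Ioo 0 1) θ := by
    intro θ hθ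
    have hpos : 0 < 1 - log θ := by linarith [log_neg hθ.1 hθ.2]
    refine (((hasDerivAt_log hθ.1.ne').const_sub 1).log hpos.ne').neg.hasDerivWithinAt
      |>.congr_deriv ?_
    field_simp
  have hmono : MonotoneOn (fun θ => -log (1 - log θ)) (Ioo (0 : ℝ) 1) := by
    intro a ha b hb hab
    have := log_le_log ha.1 hab
    have := log_neg hb.1 hb.2
    exact neg_le_neg (log_le_log (by linarith) (by linarith))
  have himage : Iio 0 ⊆ (fun θ => -log (1 - log θ)) '' Ioo (0 : ℝ) 1 := by
    intro s (hs : s < 0)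
    refine ⟨exp (1 - exp (-s)), ⟨exp_pos _, exp_lt_one_iff.2 ?_⟩, ?_⟩
    · linarith [one_lt_exp_iff.2 (neg_pos.2 hs)]
    · simp
  rw [lintegral_deriv_eq_volume_image_of_monotoneOn measurableSet_Ioo hderiv hmono,
    ← top_le_iff, ← volume_Iio (a := (0 : ℝ))]
  exact measure_mono himage

lemma sqrt_mul_two_sub_log_le {u θ : ℝ} (hu : 0 < u) (huθ : u ≤ θ ^ 2) (hθ0 : 0 ≤ θ)
    (hθ1 : θ ≤ 1) : √u * (2 - log u) ≤ 2 * (θ * (1 - log θ)) := by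
  have hsqrt : √u ≤ θ := (sqrt_le_sqrt huθ).trans_eq (sqrt_sq hθ0)
  have hlog : log u = 2 * log √u := by rw [log_sqrt hu.le]; ring
  rw [hlog]
  linarith [mul_one_sub_log_le_mul_one_sub_log (sqrt_pos.2 hu) hsqrt hθ1]

lemma inv_two_mul_le_sqrtLogSingularity_mul_indicator {x θ : ℝ} (hx : x ∈ Ioo 0 1)
    (hθ : θ ∈ Ioo 0 1) :
    (2 * (θ * (1 - log θ)))⁻¹ ≤
      |sqrtLogSingularity (x - x * cos θ)| * |(Icc (0 : ℝ) 1).indicator 1 (x - x * sin θ)| := by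
  obtain ⟨hx0, hx1⟩ := hx
  obtain ⟨hθ0, hθ1⟩ := hθ
  have hπ := pi_gt_three
  have hcos_lt : cos θ < 1 := cos_zero ▸ cos_lt_cos_of_nonneg_of_le_pi le_rfl (by linarith) hθ0
  have hcos_le : 1 - cos θ ≤ θ ^ 2 / 2 := by linarith [one_sub_sq_div_two_le_cos (x := θ)]
  have hsin : 0 ≤ sin θ := sin_nonneg_of_nonneg_of_le_pi hθ0.le (by linarith)
  have hu0 : 0 < x - x * cos θ := by nlinarith
  have huθ : x - x * cos θ ≤ θ ^ 2 := by nlinarith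
  have hu1 : x - x * cos θ < 1 := by nlinarith
  have hv : x - x * sin θ ∈ Icc (0 : ℝ) 1 := ⟨by nlinarith [sin_le_one θ], by nlinarith⟩
  have hu : x - x * cos θ ∈ Ioo (0 : ℝ) 1 := ⟨hu0, hu1⟩
  have hlog : 0 < 2 - log (x - x * cos θ) := by linarith [log_neg hu0 hu1]
  rw [sqrtLogSingularity, indicator_of_mem hu, indicator_of_mem hv, Pi.one_apply, abs_one,
    mul_one, abs_of_pos (by positivity)]
  exact inv_anti₀ (by positivity) (sqrt_mul_two_sub_log_le hu0 huθ hθ0.le hθ1.le)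

lemma S2_sqrtLogSingularity_indicator_eq_top {x : ℝ} (hx : x ∈ Ioo 0 1) :
    S2 sqrtLogSingularity ((Icc (0 : ℝ) 1).indicator 1) x = ∞ := by
  have hdiv : ∫⁻ θ in Ioo (0 : ℝ) 1, ENNReal.ofReal (2 * (θ * (1 - log θ)))⁻¹ = ∞ := by
    simp_rw [mul_inv (2 : ℝ), ENNReal.ofReal_mul (inv_nonneg.2 zero_le_two)]
    rw [lintegral_const_mul' _ _ ENNReal.ofReal_ne_top, lintegral_inv_mul_one_sub_log_eq_top,
      ENNReal.mul_top (by norm_num)]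
  have hsub : Ioo (0 : ℝ) 1 ⊆ Ioc 0 (2 * π) := Ioo_subset_Ioc_self.trans
    (Ioc_subset_Ioc_right (by linarith [pi_gt_three]))
  have hint : ∫⁻ θ in Ioc 0 (2 * π), ENNReal.ofReal (|sqrtLogSingularity (x - x * cos θ)| *
      |(Icc (0 : ℝ) 1).indicator 1 (x - x * sin θ)|) = ∞ :=
    top_le_iff.1 <| hdiv ▸ (setLIntegral_mono' measurableSet_Ioo fun θ hθ =>
      ENNReal.ofReal_le_ofReal (inv_two_mul_le_sqrtLogSingularity_mul_indicator hx hθ)).trans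
      (lintegral_mono_set hsub)
  refine top_le_iff.1 (le_trans ?_ (le_iSup₂ (f := fun t (_ : 0 < t) => _) x hx.1))
  rw [hint, ENNReal.mul_top (ENNReal.inv_ne_zero.2 ENNReal.ofReal_ne_top)]

lemma wLpNorm_eq_top_of_eq_top_on {p : ℝ≥0∞} {F : ℝ → ℝ≥0∞} {s : Set ℝ}
    (hs : volume s ≠ 0) (hF : ∀ x ∈ s, F x = ∞) : wLpNorm p F = ∞ := by
  have hpos : volume s ^ (1 / p.toReal) ≠ 0 :=
    (ENNReal.rpow_pos_of_nonneg (pos_iff_ne_zero.2 hs) (by positivity)).ne'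
  refine top_le_iff.1 ?_
  calc ∞ = ⨆ n : ℕ, (n : ℝ≥0∞) * volume s ^ (1 / p.toReal) := by
        rw [← ENNReal.iSup_mul, ENNReal.iSup_natCast, ENNReal.top_mul hpos]
    _ ≤ wLpNorm p F := iSup_le fun n => by
        rcases n.eq_zero_or_pos with rfl | hn
        · simp
        refine le_iSup₂_of_le (n : ℝ≥0∞) (Nat.cast_pos.2 hn) ?_
        gcongr
        exact fun x hx => by simp [hF x hx]

theorem bilinear_spherical_maximal_no_weak_bound_at_two_general
    (p₂ : ℝ≥0∞) (p : ℝ≥0∞) :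
    ¬ ∃ C : ℝ, ∀ f g : ℝ → ℝ,
        MemLp f 2 volume → MemLp g p₂ volume →
        wLpNorm p (S2 f g) ≤
          ENNReal.ofReal C * eLpNorm f 2 volume * eLpNorm g p₂ volume := by
  rintro ⟨C, hC⟩
  have hg : MemLp ((Icc (0 : ℝ) 1).indicator (1 : ℝ → ℝ)) p₂ volume :=
    memLp_indicator_const p₂ measurableSet_Icc 1 (Or.inr measure_Icc_lt_top.ne)
  have hS2 : wLpNorm p (S2 sqrtLogSingularity ((Icc (0 : ℝ) 1).indicator 1)) = ∞ :=
    wLpNorm_eq_top_of_eq_top_on (by simp) fun x => S2_sqrtLogSingularity_indicator_eq_top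
  have hbound := hC _ _ memLp_two_sqrtLogSingularity hg
  rw [hS2, top_le_iff] at hbound
  exact ENNReal.mul_ne_top (ENNReal.mul_ne_top ENNReal.ofReal_ne_top
    memLp_two_sqrtLogSingularity.eLpNorm_ne_top) hg.eLpNorm_ne_top hbound

/-- For `1 ≤ p₂ ≤ ∞` and `1/p = 1/2 + 1/p₂`, there is no finite constant `C`
such that the weak-type bound `‖S²(f,g)‖_{L^{p,∞}} ≤ C ‖f‖_{L²} ‖g‖_{L^{p₂}}` holds. -/
theorem bilinear_spherical_maximal_no_weak_bound_at_two
    (p₂ : ℝ≥0∞) (hp₂ : 1 ≤ p₂) (p : ℝ≥0∞) (hp : p⁻¹ = 2⁻¹ + p₂⁻¹) :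
    ¬ ∃ C : ℝ, ∀ f g : ℝ → ℝ,
        MemLp f 2 volume → MemLp g p₂ volume →
        wLpNorm p (S2 f g) ≤
          ENNReal.ofReal C * eLpNorm f 2 volume * eLpNorm g p₂ volume :=
  bilinear_spherical_maximal_no_weak_bound_at_two_general p₂ p
end

section
/- Let g = χ_{[−10,10]} and let f(x) = |x|^{−1/2} (−log|x|)^{−1} χ_{[−1/2,1/2]}(x) (with f(0) = 0). Then f ∈ L^2(ℝ), and for every x with 1/4 ≤ x ≤ 1/2 one has S²(f,g)(x) = +∞. In particular S²(f,g) is infinite on a set of positive Lebesgue measure. -/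
open MeasureTheory Real Set
open scoped ENNReal NNReal

/-!
On `(0, 1/2]`, `f² = (x log² x)⁻¹` is the derivative of `-(log x)⁻¹`, which tends to `0` at `0⁺`;
as `f` is even, `f ∈ L²`. For `x ∈ [1/4, 1/2]` take the radius `t = x`: for small `θ > 0` the point
`x - x cos θ` lies between `θ³` and `θ²`, while `g (x - x sin θ) = 1`, so the integrand is at least
`(3 θ |log θ|)⁻¹`, whose integral diverges at `0` like `log |log θ|`.
-/

open Filter Topology

namespace Real

lemma continuousAt_inv_log_zero : ContinuousAt (fun x => (log x)⁻¹) 0 := by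
  rw [← continuousWithinAt_compl_self, ContinuousWithinAt, log_zero, inv_zero]
  exact tendsto_inv_atBot_zero.comp tendsto_log_nhdsNE_zero

lemma hasDerivAt_neg_inv_log {x : ℝ} (hx : x ≠ 0) (hlog : log x ≠ 0) :
    HasDerivAt (fun y => -(log y)⁻¹) (x * log x ^ 2)⁻¹ x := by
  refine ((hasDerivAt_log hx).fun_inv hlog).fun_neg.congr_deriv ?_
  rw [neg_div, neg_neg, div_eq_mul_inv, mul_inv]

lemma integrableOn_inv_mul_log_sq {b : ℝ} (hb : b < 1) :
    IntegrableOn (fun x => (x * log x ^ 2)⁻¹) (Ioc 0 b) := by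
  refine intervalIntegral.integrableOn_deriv_of_nonneg (g := fun y => -(log y)⁻¹) ?_
    (fun x hx => hasDerivAt_neg_inv_log hx.1.ne' (log_neg hx.1 (by linarith [hx.2])).ne)
    (fun x hx => by have := hx.1; positivity)
  intro x hx
  rcases hx.1.eq_or_lt with rfl | hx0
  · exact continuousAt_inv_log_zero.neg.continuousWithinAt
  · exact ((continuousAt_log hx0.ne').inv₀ (log_neg hx0 (by linarith [hx.2])).ne).neg
      |>.continuousWithinAt

lemma intervalIntegrable_inv_abs_mul_log_sq {b : ℝ} (hb₀ : 0 ≤ b) (hb : b < 1) :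
    IntervalIntegrable (fun x => (|x| * log |x| ^ 2)⁻¹) volume (-b) b := by
  have h_right : IntervalIntegrable (fun x => (|x| * log |x| ^ 2)⁻¹) volume 0 b := by
    rw [intervalIntegrable_iff_integrableOn_Ioc_of_le hb₀]
    refine (integrableOn_inv_mul_log_sq hb).congr_fun (fun x hx => ?_) measurableSet_Ioc
    rw [abs_of_pos hx.1]
  have h_left : IntervalIntegrable (fun x => (|x| * log |x| ^ 2)⁻¹) volume (-b) 0 := by
    rw [IntervalIntegrable.iff_comp_neg]
    simpa using h_right.symm
  exact h_left.trans h_right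

lemma not_integrableOn_inv_mul_log {δ : ℝ} (hδ : 0 < δ) :
    ¬ IntegrableOn (fun x => (x * log x)⁻¹) (Ioc 0 δ) := by
  have h_small : ∀ᶠ x in 𝓝[>] (0 : ℝ), x ∈ Ioo 0 1 := Ioo_mem_nhdsGT one_pos
  have h_deriv : ∀ x ∈ Ioo (0 : ℝ) 1, HasDerivAt (fun y => log (log y)) (x * log x)⁻¹ x := by
    intro x hx
    refine ((hasDerivAt_log hx.1.ne').log (log_neg hx.1 hx.2).ne).congr_deriv ?_
    rw [div_eq_mul_inv, mul_inv, mul_comm]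
  refine not_integrableOn_of_tendsto_norm_atTop_of_deriv_isBigO_filter (𝓝[>] 0)
    (Ioc_mem_nhdsGT hδ) (h_small.mono fun x hx => (h_deriv x hx).differentiableAt) ?_
    (EventuallyEq.isBigO (h_small.mono fun x hx => (h_deriv x hx).deriv))
  have h := tendsto_norm_atTop_atTop.comp
    (tendsto_log_atTop.comp (tendsto_abs_atBot_atTop.comp tendsto_log_nhdsGT_zero))
  simpa only [Function.comp_def, log_abs] using h

end Real

lemma setLIntegral_ofReal_eq_top_of_abs_inv_mul_log_le {F : ℝ → ℝ} {δ C : ℝ} (hδ : 0 < δ)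
    (hC : 0 ≤ C) (hF : ∀ θ ∈ Ioc 0 δ, |(θ * log θ)⁻¹| ≤ C * F θ) :
    ∫⁻ θ in Ioc 0 δ, ENNReal.ofReal (F θ) = ∞ := by
  have h_top : ∫⁻ θ in Ioc 0 δ, ‖(θ * log θ)⁻¹‖ₑ = ∞ := by
    by_contra h
    exact not_integrableOn_inv_mul_log hδ
      ⟨by fun_prop, (lt_top_iff_ne_top.2 h : HasFiniteIntegral _ _)⟩
  have h_le : ∫⁻ θ in Ioc 0 δ, ‖(θ * log θ)⁻¹‖ₑ ≤
      ENNReal.ofReal C * ∫⁻ θ in Ioc 0 δ, ENNReal.ofReal (F θ) := by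
    rw [← lintegral_const_mul' _ _ ENNReal.ofReal_ne_top]
    refine setLIntegral_mono' measurableSet_Ioc fun θ hθ => ?_
    rw [← ENNReal.ofReal_mul hC, ← ofReal_norm]
    exact ENNReal.ofReal_le_ofReal (hF θ hθ)
  rw [h_top, top_le_iff, ENNReal.mul_eq_top] at h_le
  exact h_le.elim (fun h => h.2) (fun h => absurd h.1 ENNReal.ofReal_ne_top)

noncomputable def invSqrtLog (x : ℝ) : ℝ := |x| ^ (-(1/2) : ℝ) * (-log |x|)⁻¹

lemma invSqrtLog_sq (x : ℝ) : invSqrtLog x ^ 2 = (|x| * log |x| ^ 2)⁻¹ := by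
  have h : (|x| ^ (-(1/2) : ℝ)) ^ 2 = |x|⁻¹ := by
    rw [← rpow_natCast, ← rpow_mul (abs_nonneg x)]
    norm_num [rpow_neg_one]
  rw [invSqrtLog, mul_pow, h, inv_pow, neg_sq, mul_inv]

lemma memLp_two_indicator_invSqrtLog {b : ℝ} (hb₀ : 0 ≤ b) (hb : b < 1) :
    MemLp ((Icc (-b) b).indicator invSqrtLog) 2 := by
  have h_meas : Measurable ((Icc (-b) b).indicator invSqrtLog) :=
    (by unfold invSqrtLog; fun_prop : Measurable invSqrtLog).indicator measurableSet_Icc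
  rw [memLp_two_iff_integrable_sq h_meas.aestronglyMeasurable]
  have h_sq : (fun x => (Icc (-b) b).indicator invSqrtLog x ^ 2) =
      (Icc (-b) b).indicator fun x => (|x| * log |x| ^ 2)⁻¹ := by
    rw [← funext invSqrtLog_sq]
    exact (indicator_comp_of_zero (g := fun y : ℝ => y ^ 2) (by norm_num)).symm
  rw [h_sq, integrable_indicator_iff measurableSet_Icc,
    ← intervalIntegrable_iff_integrableOn_Icc_of_le (by linarith)]
  exact intervalIntegrable_inv_abs_mul_log_sq hb₀ hb

lemma abs_inv_mul_log_le_three_mul_invSqrtLog {θ u : ℝ} (hθ₀ : 0 < θ) (hθ₁ : θ < 1)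
    (hu₀ : θ ^ 3 ≤ u) (hu₁ : u ≤ θ ^ 2) : |(θ * log θ)⁻¹| ≤ 3 * invSqrtLog u := by
  have hu : 0 < u := lt_of_lt_of_le (by positivity) hu₀
  have hlogθ : 0 < -log θ := neg_pos.2 (log_neg hθ₀ hθ₁)
  have hlogu : 0 < -log u :=
    neg_pos.2 (log_neg hu (hu₁.trans_lt (pow_lt_one₀ hθ₀.le hθ₁ two_ne_zero)))
  have h_log : -log u ≤ 3 * -log θ := by
    have h := log_le_log (by positivity) hu₀
    rw [log_pow] at h
    push_cast at h
    linarith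
  have h_rpow : θ⁻¹ ≤ u ^ (-(1/2) : ℝ) := by
    rw [rpow_neg hu.le, ← sqrt_eq_rpow]
    exact inv_anti₀ (sqrt_pos.2 hu) ((sqrt_le_left hθ₀.le).2 hu₁)
  calc |(θ * log θ)⁻¹| = 3 * (θ⁻¹ * (3 * -log θ)⁻¹) := by
        rw [abs_inv, abs_mul, abs_of_pos hθ₀, abs_of_neg (neg_pos.1 hlogθ)]
        field_simp
    _ ≤ 3 * (u ^ (-(1/2) : ℝ) * (-log u)⁻¹) := by gcongr
    _ = 3 * invSqrtLog u := by rw [invSqrtLog, abs_of_pos hu]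

lemma S2_eq_top_of_setLIntegral_eq_top {f g : ℝ → ℝ} {x t : ℝ} (ht : 0 < t)
    (h : ∫⁻ θ in Ioc 0 (2 * π),
      ENNReal.ofReal (|f (x - t * cos θ)| * |g (x - t * sin θ)|) = ∞) :
    S2 f g x = ∞ :=
  top_unique <| le_iSup₂_of_le t ht <| by
    rw [h, ENNReal.mul_top (ENNReal.inv_ne_zero.2 ENNReal.ofReal_ne_top)]

lemma abs_inv_mul_log_le_circle_integrand {x θ : ℝ} (hx : x ∈ Icc (1/4 : ℝ) (1/2))
    (hθ : θ ∈ Ioc 0 (1/20 : ℝ)) :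
    |(θ * log θ)⁻¹| ≤ 3 * (|(Icc (-(1/2) : ℝ) (1/2)).indicator invSqrtLog (x - x * cos θ)| *
      |(Icc (-10 : ℝ) 10).indicator 1 (x - x * sin θ)|) := by
  obtain ⟨hx₁, hx₂⟩ := hx
  obtain ⟨hθ₀, hθ₁⟩ := hθ
  have h_g : (Icc (-10 : ℝ) 10).indicator 1 (x - x * sin θ) = (1 : ℝ) :=
    indicator_of_mem (by constructor <;> nlinarith [neg_one_le_sin θ, sin_le_one θ]) _
  have h_cos_lower : θ ^ 2 / 5 ≤ 1 - cos θ := by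
    have h_cos := cos_le_one_sub_mul_cos_sq (x := θ)
      (by rw [abs_of_pos hθ₀]; linarith [pi_gt_three])
    have h_coeff : 1 / 5 ≤ 2 / π ^ 2 := by
      rw [div_le_div_iff₀ (by norm_num) (by positivity)]
      nlinarith [pi_lt_d2, pi_gt_three]
    nlinarith
  have h_cos_upper : 1 - cos θ ≤ θ ^ 2 / 2 := by linarith [one_sub_sq_div_two_le_cos (x := θ)]
  have hu₀ : θ ^ 3 ≤ x - x * cos θ := by nlinarith
  have hu₁ : x - x * cos θ ≤ θ ^ 2 := by nlinarith
  have h_f : (Icc (-(1/2) : ℝ) (1/2)).indicator invSqrtLog (x - x * cos θ) =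
      invSqrtLog (x - x * cos θ) :=
    indicator_of_mem (mem_Icc.2 ⟨by nlinarith, by nlinarith⟩) _
  rw [h_g, h_f, abs_one, mul_one]
  calc |(θ * log θ)⁻¹| ≤ 3 * invSqrtLog (x - x * cos θ) :=
        abs_inv_mul_log_le_three_mul_invSqrtLog hθ₀ (by linarith) hu₀ hu₁
    _ ≤ 3 * |invSqrtLog (x - x * cos θ)| := by gcongr; exact le_abs_self _

lemma setLIntegral_circle_integrand_eq_top {x : ℝ} (hx : x ∈ Icc (1/4 : ℝ) (1/2)) :
    ∫⁻ θ in Ioc 0 (2 * π), ENNReal.ofReal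
      (|(Icc (-(1/2) : ℝ) (1/2)).indicator invSqrtLog (x - x * cos θ)| *
        |(Icc (-10 : ℝ) 10).indicator 1 (x - x * sin θ)|) = ∞ := by
  refine top_unique (le_of_eq_of_le ?_ (lintegral_mono_set
    (Ioc_subset_Ioc_right (by linarith [pi_gt_three] : (1/20 : ℝ) ≤ 2 * π))))
  exact (setLIntegral_ofReal_eq_top_of_abs_inv_mul_log_le (by norm_num) (by norm_num)
    fun θ hθ => abs_inv_mul_log_le_circle_integrand hx hθ).symm

/-- With `g = χ_{[-10,10]}` and `f(x) = |x|^{-1/2}(-log|x|)^{-1} χ_{[-1/2,1/2]}(x)`,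
one has `f ∈ L²(ℝ)` and `S²(f,g)(x) = +∞` for every `1/4 ≤ x ≤ 1/2`; in particular `S²(f,g)`
is infinite on a set of positive measure. -/
theorem bilinear_spherical_maximal_infinite_counterexample :
    let g : ℝ → ℝ := Set.indicator (Set.Icc (-10 : ℝ) 10) 1
    let f : ℝ → ℝ := Set.indicator (Set.Icc (-(1/2) : ℝ) (1/2))
      (fun x => |x| ^ (-(1/2) : ℝ) * (-Real.log |x|)⁻¹)
    MemLp f 2 volume ∧
      (∀ x ∈ Set.Icc (1/4 : ℝ) (1/2), S2 f g x = ∞) ∧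
      0 < volume {x : ℝ | S2 f g x = ∞} := by
  intro g f
  have h_top : ∀ x ∈ Icc (1/4 : ℝ) (1/2), S2 f g x = ∞ := fun x hx =>
    S2_eq_top_of_setLIntegral_eq_top (by linarith [hx.1])
      (setLIntegral_circle_integrand_eq_top hx)
  refine ⟨memLp_two_indicator_invSqrtLog (by norm_num) (by norm_num), h_top, ?_⟩
  calc (0 : ℝ≥0∞) < volume (Icc (1/4 : ℝ) (1/2)) := by rw [Real.volume_Icc]; norm_num
    _ ≤ volume {x : ℝ | S2 f g x = ∞} := measure_mono h_top
end

section
/- Let m ≥ 2, let 1 ≤ p_i ≤ ∞ for i = 1,…,m, and let 1/p = Σ_{i=1}^m 1/p_i. If there exists a finite constant C such that ‖S^m(f_1,…,f_m)‖_{L^p(ℝ)} ≤ C Π_{i=1}^m ‖f_i‖_{L^{p_i}(ℝ)} for all bounded compactly supported measurable functions f_1,…,f_m, then Σ_{i=1}^m 1/p_i ≤ m − 1. -/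
open MeasureTheory Real Set
open scoped ENNReal NNReal

/-!
Test with `fᵢ = 1_{[-1,1]}`. For `x ≥ 1` take the radius `t = √m x`: every `y` on the sphere within
`1/t` of the diagonal unit vector `(1/√m, …, 1/√m)` has all `x - t yᵢ ∈ [-1, 1]`, so
`S^m(f)(x)` is at least the measure of that cap. Since `σ(s)` is `m` times the volume of the cone
`(0,1) • s`, and the cone over a cap of radius `r` contains a box of size `1/4 × (r/m)^{m-1}` in an
orthonormal frame adapted to its centre, the cap has measure `≳ r^{m-1}`. Hence
`S^m(f)(x) ≳ x^{-(m-1)}` on `[1, ∞)`, which is not in `L^p` when `(m-1) p ≤ 1`; if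
`∑ 1/pᵢ = 1/p > m - 1` the left-hand side of the bound is infinite while the right-hand side is
finite.
-/

open scoped RealInnerProductSpace Pointwise
open Module

def thinBox (k : ℕ) (δ : ℝ) : Set (EuclideanSpace ℝ (Fin (k + 1))) :=
  WithLp.ofLp ⁻¹' univ.pi (Fin.cons (Ioo (1 / 2) (3 / 4)) fun _ => Ioo (-δ) δ)

theorem volume_thinBox (k : ℕ) (δ : ℝ) :
    volume (thinBox k δ) = ENNReal.ofReal (1 / 4) * ENNReal.ofReal (2 * δ) ^ k := by
  refine ((EuclideanSpace.volume_preserving_symm_measurableEquiv_toLp _).measure_preimage_equiv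
    _).trans ?_
  rw [volume_pi_pi, Fin.prod_univ_succ]
  simp only [Fin.cons_zero, Fin.cons_succ, Real.volume_Ioo, Finset.prod_const,
    Finset.card_univ, Fintype.card_fin]
  norm_num [two_mul]

section Sphere

variable {E : Type*} [NormedAddCommGroup E] [InnerProductSpace ℝ E]

theorem norm_inv_norm_smul_sub_sq_le {u z : E} (hu : ‖u‖ = 1) (hz : 1 / 2 ≤ ⟪u, z⟫) :
    ‖‖z‖⁻¹ • z - u‖ ^ 2 ≤ 4 * (‖z‖ ^ 2 - ⟪u, z⟫ ^ 2) := by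
  have ha : ⟪u, z⟫ ≤ ‖z‖ := by simpa [hu] using real_inner_le_norm u z
  have hN : 0 < ‖z‖ := by linarith
  have hexp : ‖‖z‖⁻¹ • z - u‖ ^ 2 = 2 * (‖z‖ - ⟪u, z⟫) / ‖z‖ := by
    rw [norm_sub_sq_real, norm_smul, real_inner_smul_left, real_inner_comm, hu, norm_inv,
      norm_norm]
    field_simp
    ring
  rw [hexp, div_le_iff₀ hN]
  nlinarith [mul_nonneg (sub_nonneg.2 ha) (by nlinarith : 0 ≤ 2 * ‖z‖ * (‖z‖ + ⟪u, z⟫) - 1)]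

theorem mem_Ioo_smul_sphere_cap {u z : E} {r : ℝ} (hu : ‖u‖ = 1) (hr0 : 0 ≤ r) (hr1 : r ≤ 1)
    (ha : ⟪u, z⟫ ∈ Ioo (1 / 2 : ℝ) (3 / 4)) (hw : 4 * (‖z‖ ^ 2 - ⟪u, z⟫ ^ 2) < r ^ 2) :
    z ∈ Ioo (0 : ℝ) 1 • ((↑) '' {y : Metric.sphere (0 : E) 1 | ‖(y : E) - u‖ < r}) := by
  have ha' : ⟪u, z⟫ ≤ ‖z‖ := by simpa [hu] using real_inner_le_norm u z
  have hN : 0 < ‖z‖ := by linarith [ha.1]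
  have hN1 : ‖z‖ < 1 := by nlinarith [ha.1, ha.2, mul_le_one₀ hr1 hr0 hr1]
  have hcap : ‖‖z‖⁻¹ • z - u‖ < r :=
    lt_of_pow_lt_pow_left₀ 2 hr0 ((norm_inv_norm_smul_sub_sq_le hu ha.1.le).trans_lt hw)
  refine Set.mem_smul.2 ⟨‖z‖, ⟨hN, hN1⟩, ‖z‖⁻¹ • z, ⟨⟨_, ?_⟩, hcap, rfl⟩,
    smul_inv_smul₀ hN.ne' z⟩
  simp [norm_smul, hN.ne']

theorem OrthonormalBasis.repr_preimage_thinBox_subset {k : ℕ}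
    (b : OrthonormalBasis (Fin (k + 1)) ℝ E) {r δ : ℝ} (hr0 : 0 ≤ r) (hr1 : r ≤ 1)
    (hδ : 4 * (k * δ ^ 2) < r ^ 2) :
    b.repr ⁻¹' thinBox k δ ⊆
      Ioo (0 : ℝ) 1 • ((↑) '' {y : Metric.sphere (0 : E) 1 | ‖(y : E) - b 0‖ < r}) := by
  intro x hx
  have hz : ∀ i, b.repr x i ∈ (Fin.cons (Ioo (1 / 2) (3 / 4)) fun _ => Ioo (-δ) δ :
      Fin (k + 1) → Set ℝ) i := Set.mem_univ_pi.1 hx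
  have hz0 : ⟪b 0, x⟫ ∈ Ioo (1 / 2 : ℝ) (3 / 4) := by simpa [b.repr_apply_apply] using hz 0
  have hzs : ∀ i : Fin k, b.repr x i.succ ∈ Ioo (-δ) δ := fun i => by simpa using hz i.succ
  have hnorm : ‖x‖ ^ 2 - ⟪b 0, x⟫ ^ 2 = ∑ i : Fin k, b.repr x i.succ ^ 2 := by
    rw [← b.repr.norm_map, EuclideanSpace.real_norm_sq_eq, Fin.sum_univ_succ, b.repr_apply_apply]
    ring
  have hsum : ∑ i : Fin k, b.repr x i.succ ^ 2 ≤ k * δ ^ 2 := by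
    simpa using Finset.sum_le_card_nsmul Finset.univ _ (δ ^ 2) fun i _ =>
      sq_le_sq' (hzs i).1.le (hzs i).2.le
  refine mem_Ioo_smul_sphere_cap (b.orthonormal.1 0) hr0 hr1 hz0 ?_
  rw [hnorm]
  linarith

variable [FiniteDimensional ℝ E] [MeasurableSpace E] [BorelSpace E]

theorem exists_le_toSphere_cap {u : E} (hu : ‖u‖ = 1) :
    ∃ c : ℝ≥0∞, c ≠ 0 ∧ ∀ r : ℝ, 0 < r → r ≤ 1 →
      c * ENNReal.ofReal r ^ (finrank ℝ E - 1) ≤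
        volume.toSphere {y : Metric.sphere (0 : E) 1 | ‖(y : E) - u‖ < r} := by
  obtain ⟨k, hk⟩ : ∃ k, finrank ℝ E = k + 1 := Nat.exists_eq_succ_of_ne_zero
    (finrank_pos_iff_exists_ne_zero.2 ⟨u, norm_ne_zero_iff.1 (by simp [hu])⟩).ne'
  have hu' : Orthonormal ℝ (({0} : Set (Fin (k + 1))).domRestrict fun _ => u) :=
    orthonormal_subsingleton_iff.2 fun _ => hu
  obtain ⟨b, hb⟩ := hu'.exists_orthonormalBasis_extension_of_card_eq (by simp [hk])
  obtain rfl := hb 0 rfl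
  refine ⟨(k + 1 : ℕ) * (ENNReal.ofReal (1 / 4) * ENNReal.ofReal ((k + 1 : ℝ)⁻¹) ^ k), ?_,
    fun r hr0 hr1 => ?_⟩
  · positivity
  set δ := r / (2 * (k + 1)) with hδ
  have hδr : 4 * (k * δ ^ 2) < r ^ 2 := by
    have hk' : (k : ℝ) < (k + 1) ^ 2 := by nlinarith
    calc 4 * (k * δ ^ 2) = r ^ 2 * (k / (k + 1) ^ 2) := by rw [hδ]; field_simp; ring
      _ < r ^ 2 := mul_lt_of_lt_one_right (by positivity) ((div_lt_one (by positivity)).2 hk')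
  have hcap : MeasurableSet {y : Metric.sphere (0 : E) 1 | ‖(y : E) - b 0‖ < r} :=
    (isOpen_lt (continuous_subtype_val.sub continuous_const).norm continuous_const).measurableSet
  rw [Measure.toSphere_apply' _ hcap, hk, Nat.add_sub_cancel]
  calc _ = ((k + 1 : ℕ) : ℝ≥0∞) * volume (thinBox k δ) := by
        rw [volume_thinBox, show 2 * δ = (k + 1 : ℝ)⁻¹ * r by rw [hδ]; field_simp,
          ENNReal.ofReal_mul (by positivity), mul_pow]
        ring
    _ = (k + 1 : ℕ) * volume (b.repr ⁻¹' thinBox k δ) :=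
        congrArg _ (b.measurePreserving_measurableEquiv.measure_preimage_equiv _).symm
    _ ≤ _ := by gcongr; exact b.repr_preimage_thinBox_subset hr0.le hr1 hδr

end Sphere

theorem sphMeasure_le_sphAvg_indicator (m : ℕ) (t x : ℝ) :
    sphMeasure m {y | ∀ i, |x - t * (y : EuclideanSpace ℝ (Fin m)) i| ≤ 1} ≤
      sphAvg m (fun _ => (Icc (-1 : ℝ) 1).indicator 1) t x := by
  set A : Set (Metric.sphere (0 : EuclideanSpace ℝ (Fin m)) 1) :=
    {y | ∀ i, |x - t * (y : EuclideanSpace ℝ (Fin m)) i| ≤ 1}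
  have hA : MeasurableSet A := IsClosed.measurableSet <| by
    simp only [A, ofPred_forall]
    exact isClosed_iInter fun i => isClosed_le (by fun_prop) continuous_const
  rw [← lintegral_indicator_one hA, sphAvg]
  refine lintegral_mono fun y => ?_
  by_cases hy : y ∈ A
  · rw [indicator_of_mem hy]
    refine le_of_eq (Finset.prod_eq_one fun i _ => ?_).symm
    rw [indicator_of_mem (mem_Icc.2 (abs_le.1 (hy i)))]
    simp
  · simp [indicator_of_notMem hy]

theorem abs_sub_mul_apply_le_one {ι : Type*} [Fintype ι] {t x : ℝ} {y y₀ : EuclideanSpace ℝ ι}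
    (ht : 0 < t) (hy₀ : ∀ i, t * y₀ i = x) (hy : ‖y - y₀‖ < t⁻¹) (i : ι) :
    |x - t * y i| ≤ 1 := by
  calc |x - t * y i| = t * ‖(y - y₀) i‖ := by
        rw [← hy₀ i, ← mul_sub, abs_mul, abs_of_pos ht, Real.norm_eq_abs, abs_sub_comm]; rfl
    _ ≤ t * ‖y - y₀‖ := by gcongr; exact PiLp.norm_apply_le _ i
    _ ≤ 1 := by nlinarith [mul_inv_cancel₀ ht.ne']

theorem exists_le_Sm_indicator (m : ℕ) (hm : 1 ≤ m) :
    ∃ c : ℝ≥0∞, c ≠ 0 ∧ ∀ x : ℝ, 1 ≤ x →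
      c * ENNReal.ofReal x⁻¹ ^ (m - 1) ≤ Sm m (fun _ => (Icc (-1 : ℝ) 1).indicator 1) x := by
  set s := √(m : ℝ)
  have hs : 1 ≤ s := Real.one_le_sqrt.2 (by exact_mod_cast hm)
  set y₀ : EuclideanSpace ℝ (Fin m) := WithLp.toLp 2 fun _ => s⁻¹
  have hy₀ : ‖y₀‖ = 1 := by
    rw [EuclideanSpace.norm_eq]
    simp [y₀, s, inv_pow]
    exact mul_inv_cancel₀ (zero_lt_one.trans_le hs).ne'
  obtain ⟨c, hc, hcap⟩ := exists_le_toSphere_cap hy₀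
  set σ := (volume : Measure (EuclideanSpace ℝ (Fin m))).toSphere
  refine ⟨(σ univ)⁻¹ * c * ENNReal.ofReal s⁻¹ ^ (m - 1), ?_, fun x hx => ?_⟩
  · simpa [hc] using fun h => absurd h (not_le.2 (zero_lt_one.trans_le hs))
  have ht : 0 < s * x := by positivity
  calc (σ univ)⁻¹ * c * ENNReal.ofReal s⁻¹ ^ (m - 1) * ENNReal.ofReal x⁻¹ ^ (m - 1)
      = (σ univ)⁻¹ *
          (c * ENNReal.ofReal (s * x)⁻¹ ^ (finrank ℝ (EuclideanSpace ℝ (Fin m)) - 1)) := by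
        rw [finrank_euclideanSpace_fin, mul_inv, ENNReal.ofReal_mul (by positivity), mul_pow]
        ring
    _ ≤ (σ univ)⁻¹ * σ {y | ‖(y : _) - y₀‖ < (s * x)⁻¹} := by
        gcongr
        exact hcap _ (inv_pos.2 ht) (inv_le_one_of_one_le₀ (one_le_mul_of_one_le_of_one_le hs hx))
    _ = sphMeasure m {y | ‖(y : _) - y₀‖ < (s * x)⁻¹} := rfl
    _ ≤ sphMeasure m {y | ∀ i, |x - s * x * (y : EuclideanSpace ℝ (Fin m)) i| ≤ 1} :=
        measure_mono fun y hy =>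
          abs_sub_mul_apply_le_one ht (fun _ => by simp [y₀]; field_simp) hy
    _ ≤ sphAvg m _ (s * x) x := sphMeasure_le_sphAvg_indicator m _ x
    _ ≤ Sm m _ x := le_iSup₂ (f := fun t (_ : 0 < t) => sphAvg m _ t x) (s * x) ht

theorem ENNReal.toReal_mul_toReal_le_one_of_le_inv {a b : ℝ≥0∞} (h : a ≤ b⁻¹) :
    a.toReal * b.toReal ≤ 1 := by
  rw [← ENNReal.toReal_mul]
  exact ENNReal.toReal_le_of_le_ofReal zero_le_one
    (by simpa using (mul_le_mul_left h b).trans (ENNReal.inv_mul_le_one b))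

theorem lintegral_Ioi_ofReal_inv_eq_top {a : ℝ} (ha : 0 ≤ a) :
    ∫⁻ x in Ioi a, ENNReal.ofReal x⁻¹ = ∞ := by
  by_contra h
  refine not_integrableOn_Ioi_inv ((lintegral_ofReal_ne_top_iff_integrable
    measurable_inv.aestronglyMeasurable ?_).1 h)
  filter_upwards [ae_restrict_mem measurableSet_Ioi] with x hx
  exact inv_nonneg.2 (ha.trans hx.le)

theorem lpNorm_eq_top_of_inv_pow_le {P c : ℝ≥0∞} {F : ℝ → ℝ≥0∞} {k : ℕ}
    (hP0 : P ≠ 0) (hP : P ≠ ∞) (hk : k * P.toReal ≤ 1) (hc : c ≠ 0)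
    (hF : ∀ x : ℝ, 1 ≤ x → c * ENNReal.ofReal x⁻¹ ^ k ≤ F x) : lpNorm P F = ∞ := by
  set q := P.toReal
  have hq : 0 < q := ENNReal.toReal_pos hP0 hP
  have hpt : ∀ x ∈ Ioi (1 : ℝ), c ^ q * ENNReal.ofReal x⁻¹ ≤ F x ^ q := by
    intro x hx
    have hx1 : ENNReal.ofReal x⁻¹ ≤ 1 := ENNReal.ofReal_le_one.2 (inv_le_one_of_one_le₀ hx.le)
    calc c ^ q * ENNReal.ofReal x⁻¹
        = c ^ q * ENNReal.ofReal x⁻¹ ^ (1 : ℝ) := by rw [ENNReal.rpow_one]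
      _ ≤ c ^ q * ENNReal.ofReal x⁻¹ ^ ((k : ℝ) * q) :=
          mul_le_mul_right (ENNReal.rpow_le_rpow_of_exponent_ge hx1 hk) _
      _ = (c * ENNReal.ofReal x⁻¹ ^ k) ^ q := by
          rw [ENNReal.mul_rpow_of_nonneg _ _ hq.le, ENNReal.rpow_mul, ENNReal.rpow_natCast]
      _ ≤ F x ^ q := ENNReal.rpow_le_rpow (hF x hx.le) hq.le
  have hint : ∫⁻ x, F x ^ q = ∞ := by
    refine top_unique (le_trans ?_ (setLIntegral_le_lintegral (Ioi 1) _))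
    calc ∞ = ∫⁻ x in Ioi (1 : ℝ), c ^ q * ENNReal.ofReal x⁻¹ := by
          rw [lintegral_const_mul _ measurable_inv.ennreal_ofReal,
            lintegral_Ioi_ofReal_inv_eq_top zero_le_one,
            ENNReal.mul_top (ENNReal.rpow_pos_of_nonneg (pos_iff_ne_zero.2 hc) hq.le).ne']
      _ ≤ ∫⁻ x in Ioi (1 : ℝ), F x ^ q := setLIntegral_mono' measurableSet_Ioi hpt
  rw [_root_.lpNorm, if_neg hP, hint]
  exact ENNReal.top_rpow_of_pos (by positivity)

theorem measurable_bounded_hasCompactSupport_indicator_Icc (a b : ℝ) :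
    Measurable ((Icc a b).indicator (1 : ℝ → ℝ)) ∧
      (∃ M : ℝ, ∀ x, |(Icc a b).indicator (1 : ℝ → ℝ) x| ≤ M) ∧
      HasCompactSupport ((Icc a b).indicator (1 : ℝ → ℝ)) :=
  ⟨measurable_one.indicator measurableSet_Icc,
    ⟨1, fun x => by by_cases hx : x ∈ Icc a b <;> simp [hx]⟩,
    HasCompactSupport.intro isCompact_Icc fun _ hx => indicator_of_notMem hx _⟩

/-- Necessity of condition (a): if the strong-type bound holds for all bounded
compactly supported measurable functions, then `Σ 1/pᵢ ≤ m - 1`. -/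
theorem multilinear_spherical_maximal_necessity_a
    (m : ℕ) (hm : 2 ≤ m) (p : Fin m → ℝ≥0∞) (hp : ∀ i, 1 ≤ p i)
    (P : ℝ≥0∞) (hP : P⁻¹ = ∑ i, (p i)⁻¹)
    (hbound : ∃ C : ℝ≥0∞, C ≠ ∞ ∧ ∀ f : Fin m → ℝ → ℝ,
      (∀ i, Measurable (f i) ∧ (∃ M : ℝ, ∀ x, |f i x| ≤ M) ∧ HasCompactSupport (f i)) →
      lpNorm P (Sm m f) ≤ C * ∏ i, eLpNorm (f i) (p i) volume) :
    ∑ i, (p i)⁻¹ ≤ (m : ℝ≥0∞) - 1 := by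
  by_contra! hsum
  obtain ⟨C, hC, hbound⟩ := hbound
  have hP0 : P ≠ 0 := by
    rintro rfl
    have : ∑ i, (p i)⁻¹ ≤ ∑ _i : Fin m, 1 :=
      Finset.sum_le_sum fun i _ => ENNReal.inv_le_one.2 (hp i)
    simp [← hP] at this
  have hPtop : P ≠ ∞ := by
    rintro rfl
    simp [← hP] at hsum
  have hk : ((m - 1 : ℕ) : ℝ) * P.toReal ≤ 1 := by
    have hle : ((m - 1 : ℕ) : ℝ≥0∞) ≤ P⁻¹ := by
      rw [hP, ENNReal.natCast_sub, Nat.cast_one]; exact hsum.le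
    have := ENNReal.toReal_mul_toReal_le_one_of_le_inv hle
    rwa [ENNReal.toReal_natCast] at this
  obtain ⟨c, hc, hSm⟩ := exists_le_Sm_indicator m (by omega)
  have hfin : ∀ i, eLpNorm ((Icc (-1 : ℝ) 1).indicator (1 : ℝ → ℝ)) (p i) volume < ∞ := fun i =>
    (memLp_indicator_const (p i) measurableSet_Icc (1 : ℝ)
      (Or.inr measure_Icc_lt_top.ne)).eLpNorm_lt_top
  refine (hbound _ fun _ => measurable_bounded_hasCompactSupport_indicator_Icc (-1) 1).not_gt ?_
  rw [lpNorm_eq_top_of_inv_pow_le hP0 hPtop hk hc hSm]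
  exact ENNReal.mul_lt_top hC.lt_top (ENNReal.prod_lt_top fun i _ => hfin i)
end

section
/- Let f, g : ℝ → [0,∞) be measurable, let 0 < ε < 1, and let q > 1 with conjugate exponent q' = q/(q−1) satisfy ε q' < 2. Then there exists a constant C < ∞, depending only on ε and q, such that for every x ∈ ℝ: sup_{t>0} ∫_0^{1/√2} f(x − t y) g(x − t √(1−y²)) (1−y²)^{−1/2} dy ≤ C · [sup_{t>0} ( ∫_0^{1/√2} f(x − t y)² y^{−1+ε} dy )^{1/2}] · [sup_{t>0} ( ∫_{1/√2}^1 g(x − t z)^{2q} dz )^{1/(2q)}]. -/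
open MeasureTheory Real Set
open scoped ENNReal NNReal

/-! For fixed `t`, write the integrand as `F ^ (1/2) * G ^ (1/(2q)) * H ^ (1/(2q'))` with
`F = f(x - t y)² y^(ε-1)`, `G = y g(x - t √(1 - y²))^(2q)` and `H = y^(1 - ε q') (1 - y²)^(-q')`;
the powers of `y` cancel because `1/q + 1/q' = 1`. Hölder's inequality with the three exponents
`1/2 + 1/(2q) + 1/(2q') = 1` separates the factors. The substitution `z = √(1 - y²)` maps
`(0, 1/√2)` onto `(1/√2, 1)` with `y dy = -z dz`, so `∫ G ≤ ∫_{1/√2}^1 g(x - t z)^(2q) dz`, and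
`H` is integrable near `0` since `1 - ε q' > -1`, with `∫ H ≤ 2^q' / (2 - ε q')`. -/

theorem ENNReal.lintegral_mul_mul_rpow_le {α : Type*} [MeasurableSpace α] {μ : Measure α}
    {f g h : α → ℝ≥0∞} (hf : AEMeasurable f μ) (hg : AEMeasurable g μ)
    (hh : AEMeasurable h μ) {a b c : ℝ} (ha : 0 ≤ a) (hb : 0 ≤ b) (hc : 0 ≤ c)
    (habc : a + b + c = 1) :
    ∫⁻ x, f x ^ a * g x ^ b * h x ^ c ∂μ ≤
      (∫⁻ x, f x ∂μ) ^ a * (∫⁻ x, g x ∂μ) ^ b * (∫⁻ x, h x ∂μ) ^ c := by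
  have key := ENNReal.lintegral_prod_norm_pow_le (μ := μ) Finset.univ (f := ![f, g, h])
    (p := ![a, b, c]) (by simp [Fin.forall_fin_succ, hf, hg, hh])
    (by simpa [Fin.sum_univ_three] using habc) (by simp [Fin.forall_fin_succ, ha, hb, hc])
  simpa only [Fin.prod_univ_three, Matrix.cons_val_zero, Matrix.cons_val_one,
    Matrix.cons_val_two, Matrix.head_cons, Matrix.tail_cons, mul_assoc] using key

theorem lintegral_Ioc_zero_ofReal_rpow {r s : ℝ} (hr : 0 ≤ r) (hs : -1 < s) :
    ∫⁻ y in Ioc 0 r, ENNReal.ofReal (y ^ s) = ENNReal.ofReal (r ^ (s + 1) / (s + 1)) := by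
  have hint : IntegrableOn (fun y : ℝ => y ^ s) (Ioc 0 r) :=
    (intervalIntegrable_iff_integrableOn_Ioc_of_le hr).1
      (intervalIntegral.intervalIntegrable_rpow' hs)
  rw [← ofReal_integral_eq_lintegral_ofReal hint
      ((ae_restrict_iff' measurableSet_Ioc).2 (ae_of_all _ fun y hy => rpow_nonneg hy.1.le _)),
    ← intervalIntegral.integral_of_le hr, integral_rpow (Or.inl hs),
    zero_rpow (by linarith), sub_zero]

theorem sqrt_one_sub_sq_sqrt_one_sub_sq {y : ℝ} (hy0 : 0 ≤ y) (hy1 : y ≤ 1) :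
    √(1 - √(1 - y ^ 2) ^ 2) = y := by
  rw [sq_sqrt (by nlinarith), sub_sub_cancel, sqrt_sq hy0]

theorem lintegral_Ioo_ofReal_mul_comp_sqrt_one_sub_sq {a : ℝ} (ha0 : 0 ≤ a) (ha1 : a ≤ 1)
    (h : ℝ → ℝ≥0∞) :
    ∫⁻ y in Ioo 0 a, ENNReal.ofReal y * h √(1 - y ^ 2) =
      ∫⁻ z in Ioo √(1 - a ^ 2) 1, ENNReal.ofReal z * h z := by
  set s := Ioo √(1 - a ^ 2) 1
  have hs : ∀ z ∈ s, 0 < z ∧ 0 < 1 - z ^ 2 := fun z hz =>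
    have := (sqrt_nonneg _).trans_lt hz.1
    ⟨this, by nlinarith [hz.2]⟩
  have himage : (fun z => √(1 - z ^ 2)) '' s = Ioo 0 a := by
    ext y
    constructor
    · rintro ⟨z, hz, rfl⟩
      obtain ⟨hz0, hz1⟩ := hs z hz
      have := (sqrt_lt' hz0).1 hz.1
      exact ⟨sqrt_pos.2 hz1, (sqrt_lt_sqrt hz1.le (by linarith)).trans_eq (sqrt_sq ha0)⟩
    · rintro ⟨hy0, hya⟩
      refine ⟨√(1 - y ^ 2), ⟨?_, ?_⟩, sqrt_one_sub_sq_sqrt_one_sub_sq hy0.le (by linarith)⟩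
      · exact sqrt_lt_sqrt (by nlinarith) (by nlinarith)
      · exact (sqrt_lt' one_pos).2 (by nlinarith)
  have hderiv : ∀ z ∈ s, HasDerivWithinAt (fun z => √(1 - z ^ 2))
      (-(z / √(1 - z ^ 2))) s z := by
    intro z hz
    have h1 := ((hasDerivAt_pow 2 z).const_sub 1).sqrt (hs z hz).2.ne'
    exact h1.hasDerivWithinAt.congr_deriv (by push_cast; ring)
  have hinj : InjOn (fun z => √(1 - z ^ 2)) s := fun z₁ hz₁ z₂ hz₂ he => by
    rw [← sqrt_one_sub_sq_sqrt_one_sub_sq (hs z₁ hz₁).1.le hz₁.2.le,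
      ← sqrt_one_sub_sq_sqrt_one_sub_sq (hs z₂ hz₂).1.le hz₂.2.le]
    exact congrArg (fun w => √(1 - w ^ 2)) he
  rw [← himage, lintegral_image_eq_lintegral_abs_deriv_mul measurableSet_Ioo hderiv hinj]
  refine setLIntegral_congr_fun measurableSet_Ioo fun z hz => ?_
  obtain ⟨hz0, hz1⟩ := hs z hz
  rw [sqrt_one_sub_sq_sqrt_one_sub_sq hz0.le hz.2.le, ← mul_assoc, ← ENNReal.ofReal_mul
    (abs_nonneg _), abs_neg, abs_of_pos (div_pos hz0 (sqrt_pos.2 hz1)),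
    div_mul_cancel₀ _ (sqrt_pos.2 hz1).ne']

theorem inv_sqrt_two_lt_one : (√2)⁻¹ < (1 : ℝ) := inv_lt_one_of_one_lt₀ one_lt_sqrt_two

theorem inv_sqrt_two_sq : (√2)⁻¹ ^ 2 = (1 / 2 : ℝ) := by
  rw [inv_pow, sq_sqrt zero_le_two, one_div]

theorem lintegral_Ioc_rpow_mul_one_sub_sq_rpow_neg_le {s p : ℝ} (hs : -1 < s) (hp : 0 ≤ p) :
    ∫⁻ y in Ioc 0 (√2)⁻¹, ENNReal.ofReal (y ^ s * (1 - y ^ 2) ^ (-p)) ≤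
      ENNReal.ofReal (2 ^ p / (s + 1)) := by
  have hr0 : (0 : ℝ) ≤ (√2)⁻¹ := by positivity
  calc ∫⁻ y in Ioc 0 (√2)⁻¹, ENNReal.ofReal (y ^ s * (1 - y ^ 2) ^ (-p))
      ≤ ∫⁻ y in Ioc 0 (√2)⁻¹, ENNReal.ofReal (2 ^ p) * ENNReal.ofReal (y ^ s) := by
        refine setLIntegral_mono' measurableSet_Ioc fun y hy => ?_
        have hy2 : 1 / 2 ≤ 1 - y ^ 2 := by
          nlinarith [inv_sqrt_two_sq, pow_le_pow_left₀ hy.1.le hy.2 2]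
        rw [← ENNReal.ofReal_mul (by positivity), mul_comm (2 ^ p)]
        refine ENNReal.ofReal_le_ofReal (mul_le_mul_of_nonneg_left ?_ (rpow_nonneg hy.1.le _))
        calc (1 - y ^ 2) ^ (-p) ≤ (1 / 2) ^ (-p) :=
              rpow_le_rpow_of_nonpos (by norm_num) hy2 (neg_nonpos.2 hp)
          _ = 2 ^ p := by rw [one_div, inv_rpow zero_le_two, rpow_neg zero_le_two, inv_inv]
    _ = ENNReal.ofReal (2 ^ p) * ENNReal.ofReal ((√2)⁻¹ ^ (s + 1) / (s + 1)) := by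
        rw [lintegral_const_mul' _ _ ENNReal.ofReal_ne_top, lintegral_Ioc_zero_ofReal_rpow hr0 hs]
    _ ≤ ENNReal.ofReal (2 ^ p) * ENNReal.ofReal (1 / (s + 1)) := by
        gcongr ENNReal.ofReal (2 ^ p) * ENNReal.ofReal ?_
        exact div_le_div_of_nonneg_right (rpow_le_one hr0 inv_sqrt_two_lt_one.le (by linarith)) (by linarith)
    _ = ENNReal.ofReal (2 ^ p / (s + 1)) := by
        rw [← ENNReal.ofReal_mul (by positivity), mul_one_div]

theorem lintegral_Ioc_ofReal_mul_comp_sqrt_one_sub_sq_le (h : ℝ → ℝ) :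
    ∫⁻ y in Ioc 0 (√2)⁻¹, ENNReal.ofReal (y * h √(1 - y ^ 2)) ≤
      ∫⁻ z in Ioc (√2)⁻¹ 1, ENNReal.ofReal (h z) := by
  have hr0 : (0 : ℝ) ≤ (√2)⁻¹ := by positivity
  have hr : √(1 - (√2)⁻¹ ^ 2) = (√2)⁻¹ := by
    rw [inv_sqrt_two_sq, show (1 : ℝ) - 1 / 2 = 1 / 2 by norm_num, ← inv_sqrt_two_sq, sqrt_sq hr0]
  calc ∫⁻ y in Ioc 0 (√2)⁻¹, ENNReal.ofReal (y * h √(1 - y ^ 2))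
      = ∫⁻ y in Ioo 0 (√2)⁻¹, ENNReal.ofReal y * ENNReal.ofReal (h √(1 - y ^ 2)) := by
        rw [← setLIntegral_congr Ioo_ae_eq_Ioc]
        exact setLIntegral_congr_fun measurableSet_Ioo fun y hy => ENNReal.ofReal_mul hy.1.le
    _ = ∫⁻ z in Ioo (√2)⁻¹ 1, ENNReal.ofReal z * ENNReal.ofReal (h z) := by
        rw [lintegral_Ioo_ofReal_mul_comp_sqrt_one_sub_sq hr0 inv_sqrt_two_lt_one.le (fun z => ENNReal.ofReal (h z)),
          hr]
    _ ≤ ∫⁻ z in Ioc (√2)⁻¹ 1, ENNReal.ofReal (h z) :=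
        (setLIntegral_mono' measurableSet_Ioo fun z hz =>
          mul_le_of_le_one_left' (ENNReal.ofReal_le_one.2 hz.2.le)).trans
          (lintegral_mono_set Ioo_subset_Ioc_self)

theorem ofReal_mul_mul_inv_sqrt_eq_rpow_mul_rpow_mul_rpow {ε q q' u v y : ℝ}
    (hqq' : q.HolderConjugate q') (hu : 0 ≤ u) (hv : 0 ≤ v) (hy0 : 0 < y) (hy1 : y < 1) :
    ENNReal.ofReal (u * v * (√(1 - y ^ 2))⁻¹) =
      ENNReal.ofReal (u ^ 2 * y ^ (-1 + ε)) ^ (1 / 2 : ℝ) *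
        ENNReal.ofReal (y * v ^ (2 * q)) ^ (1 / (2 * q)) *
        ENNReal.ofReal (y ^ (1 - ε * q') * (1 - y ^ 2) ^ (-q')) ^ (1 / (2 * q')) := by
  have hw : 0 < 1 - y ^ 2 := by nlinarith
  have hq := hqq'.pos
  have hq' := hqq'.symm.pos
  rw [ENNReal.ofReal_rpow_of_nonneg (by positivity) (by norm_num),
    ENNReal.ofReal_rpow_of_nonneg (by positivity) (by positivity),
    ENNReal.ofReal_rpow_of_nonneg (by positivity) (by positivity),
    ← ENNReal.ofReal_mul (by positivity), ← ENNReal.ofReal_mul (by positivity)]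
  congr 1
  rw [mul_rpow (by positivity) (by positivity), mul_rpow hy0.le (by positivity),
    mul_rpow (by positivity) (by positivity), ← rpow_natCast u 2,
    ← rpow_mul hu, ← rpow_mul hy0.le, ← rpow_mul hv, ← rpow_mul hy0.le, ← rpow_mul hw.le,
    sqrt_eq_rpow, ← rpow_neg hw.le]
  have hexp : (-1 + ε) * (1 / 2) + 1 / (2 * q) + (1 - ε * q') * (1 / (2 * q')) = 0 := by
    field_simp
    linear_combination (-1) * hqq'.mul_eq_add
  have hy : y ^ ((-1 + ε) * (1 / 2)) * y ^ (1 / (2 * q)) * y ^ ((1 - ε * q') * (1 / (2 * q'))) =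
      1 := by
    rw [← rpow_add hy0, ← rpow_add hy0, hexp, rpow_zero]
  rw [show ((2 : ℕ) : ℝ) * (1 / 2) = 1 by norm_num, show 2 * q * (1 / (2 * q)) = 1 by field_simp,
    show -q' * (1 / (2 * q')) = -(1 / 2) by field_simp, rpow_one, rpow_one]
  linear_combination (-(u * v * (1 - y ^ 2) ^ (-(1 / 2) : ℝ))) * hy

theorem bilinear_arc_pointwise_estimate_general
    (ε : ℝ) (q : ℝ) (hq : 1 < q)
    (q' : ℝ) (hq' : q' = q / (q - 1)) (hεq : ε * q' < 2) :
    ∃ C : ℝ, ∀ f g : ℝ → ℝ, Measurable f → Measurable g →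
      (∀ x, 0 ≤ f x) → (∀ x, 0 ≤ g x) → ∀ x : ℝ,
      (⨆ (t : ℝ) (_ : 0 < t),
          ∫⁻ y in Set.Ioc (0 : ℝ) (Real.sqrt 2)⁻¹,
            ENNReal.ofReal
              (f (x - t * y) * g (x - t * Real.sqrt (1 - y ^ 2)) *
                (Real.sqrt (1 - y ^ 2))⁻¹)) ≤
        ENNReal.ofReal C *
          ((⨆ (t : ℝ) (_ : 0 < t),
              (∫⁻ y in Set.Ioc (0 : ℝ) (Real.sqrt 2)⁻¹,
                ENNReal.ofReal (f (x - t * y) ^ 2 * y ^ (-1 + ε))) ^ (1 / 2 : ℝ)) *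
            (⨆ (t : ℝ) (_ : 0 < t),
              (∫⁻ z in Set.Ioc ((Real.sqrt 2)⁻¹) (1 : ℝ),
                ENNReal.ofReal (g (x - t * z) ^ (2 * q))) ^ (1 / (2 * q)))) := by
  have hqq' : q.HolderConjugate q' := (Real.holderConjugate_iff_eq_conjExponent hq).2 hq'
  have hq0 := hqq'.pos
  have hq'0 := hqq'.symm.pos
  refine ⟨(2 ^ q' / (2 - ε * q')) ^ (1 / (2 * q')), fun f g hf hg hf0 hg0 x => ?_⟩
  refine iSup₂_le fun t ht => ?_
  have hsum : 1 / 2 + 1 / (2 * q) + 1 / (2 * q') = 1 := by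
    have := hqq'.inv_add_inv_eq_one
    field_simp at this ⊢
    linarith
  have hW := lintegral_Ioc_rpow_mul_one_sub_sq_rpow_neg_le (s := 1 - ε * q') (by linarith)
    hq'0.le
  rw [show 1 - ε * q' + 1 = 2 - ε * q' by ring] at hW
  calc _ = ∫⁻ y in Ioc 0 (√2)⁻¹,
          ENNReal.ofReal (f (x - t * y) ^ 2 * y ^ (-1 + ε)) ^ (1 / 2 : ℝ) *
          ENNReal.ofReal (y * g (x - t * √(1 - y ^ 2)) ^ (2 * q)) ^ (1 / (2 * q)) *
          ENNReal.ofReal (y ^ (1 - ε * q') * (1 - y ^ 2) ^ (-q')) ^ (1 / (2 * q')) :=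
        setLIntegral_congr_fun measurableSet_Ioc fun y hy =>
          ofReal_mul_mul_inv_sqrt_eq_rpow_mul_rpow_mul_rpow hqq' (hf0 _) (hg0 _) hy.1
            (hy.2.trans_lt inv_sqrt_two_lt_one)
    _ ≤ (∫⁻ y in Ioc 0 (√2)⁻¹, ENNReal.ofReal (f (x - t * y) ^ 2 * y ^ (-1 + ε))) ^ (1 / 2 : ℝ) *
          (∫⁻ y in Ioc 0 (√2)⁻¹,
            ENNReal.ofReal (y * g (x - t * √(1 - y ^ 2)) ^ (2 * q))) ^ (1 / (2 * q)) *
          (∫⁻ y in Ioc 0 (√2)⁻¹,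
            ENNReal.ofReal (y ^ (1 - ε * q') * (1 - y ^ 2) ^ (-q'))) ^ (1 / (2 * q')) :=
        ENNReal.lintegral_mul_mul_rpow_le (by fun_prop) (by fun_prop) (by fun_prop)
          (by norm_num) (by positivity) (by positivity) hsum
    _ ≤ _ := by
        rw [mul_comm (ENNReal.ofReal _), ← ENNReal.ofReal_rpow_of_nonneg
          (div_nonneg (by positivity) (by linarith)) (by positivity)]
        refine mul_le_mul' (mul_le_mul' (le_iSup₂_of_le t ht le_rfl)
          (le_iSup₂_of_le t ht (ENNReal.rpow_le_rpow ?_ (by positivity))))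
          (ENNReal.rpow_le_rpow hW (by positivity))
        exact lintegral_Ioc_ofReal_mul_comp_sqrt_one_sub_sq_le _

/-- key pointwise estimate in the proof of the bilinear bound: the weighted
arc average of `f ⊗ g` is dominated by a product of two weighted `p`-maximal functions. -/
theorem bilinear_arc_pointwise_estimate
    (ε : ℝ) (hε0 : 0 < ε) (hε1 : ε < 1) (q : ℝ) (hq : 1 < q)
    (q' : ℝ) (hq' : q' = q / (q - 1)) (hεq : ε * q' < 2) :
    ∃ C : ℝ, ∀ f g : ℝ → ℝ, Measurable f → Measurable g →
      (∀ x, 0 ≤ f x) → (∀ x, 0 ≤ g x) → ∀ x : ℝ,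
      (⨆ (t : ℝ) (_ : 0 < t),
          ∫⁻ y in Set.Ioc (0 : ℝ) (Real.sqrt 2)⁻¹,
            ENNReal.ofReal
              (f (x - t * y) * g (x - t * Real.sqrt (1 - y ^ 2)) *
                (Real.sqrt (1 - y ^ 2))⁻¹)) ≤
        ENNReal.ofReal C *
          ((⨆ (t : ℝ) (_ : 0 < t),
              (∫⁻ y in Set.Ioc (0 : ℝ) (Real.sqrt 2)⁻¹,
                ENNReal.ofReal (f (x - t * y) ^ 2 * y ^ (-1 + ε))) ^ (1 / 2 : ℝ)) *
            (⨆ (t : ℝ) (_ : 0 < t),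
              (∫⁻ z in Set.Ioc ((Real.sqrt 2)⁻¹) (1 : ℝ),
                ENNReal.ofReal (g (x - t * z) ^ (2 * q))) ^ (1 / (2 * q)))) :=
  bilinear_arc_pointwise_estimate_general ε q hq q' hq' hεq
end

section
/- Let m ≥ 2. There is a constant c_m > 0, depending only on m, such that for every 0 < δ ≤ 1/2, taking f_1 = ⋯ = f_m = χ_{[−δ,δ]}, one has S^m(f_1,…,f_m)(x) ≥ c_m δ^{m−1} for every x with 1/2 ≤ x ≤ 1. -/
/-!
Take `t = x √m` and let `u = (1, …, 1) / √m`. A point `y` of the unit sphere within distance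
`δ / √m` of `u` has every coordinate within `δ / √m` of `1 / √m`, so `x - t yᵢ ∈ [-δ, δ]` for all
`i`; hence `S^m_t(χ, …, χ)(x)` is at least the normalized measure of this cap. A cap of radius
`ρ ≤ 1` has normalized measure `≳ ρ^{m-1}`: the unit cone over it contains the cylinder of length
`1/4` and cross-section radius `≈ ρ` along `u`, which is the image under a reflection of a
coordinate box of volume `≈ ρ^{m-1}`.
-/

open MeasureTheory Real Set
open scoped ENNReal NNReal

open scoped Pointwise

section NormedSpace

variable {E : Type*} [NormedAddCommGroup E] [NormedSpace ℝ E]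

lemma norm_inv_norm_smul_sub_inv_norm_smul_le (z : E) {v : E} (hv : v ≠ 0) :
    ‖‖z‖⁻¹ • z - ‖v‖⁻¹ • v‖ ≤ 2 * ‖z - v‖ / ‖v‖ := by
  have hv' : 0 < ‖v‖ := norm_pos_iff.2 hv
  have hradial : ‖(‖z‖⁻¹ - ‖v‖⁻¹) • z‖ ≤ ‖z - v‖ / ‖v‖ := by
    rcases eq_or_ne z 0 with rfl | hz
    · simp only [smul_zero, norm_zero]; positivity
    have hz' : 0 < ‖z‖ := norm_pos_iff.2 hz
    calc ‖(‖z‖⁻¹ - ‖v‖⁻¹) • z‖ = |‖v‖ - ‖z‖| / ‖v‖ := by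
          rw [norm_smul, Real.norm_eq_abs, inv_sub_inv hz'.ne' hv'.ne', abs_div,
            abs_mul, abs_norm, abs_norm]
          field_simp
      _ ≤ ‖z - v‖ / ‖v‖ := by
          gcongr
          rw [norm_sub_rev]
          exact abs_norm_sub_norm_le v z
  calc ‖‖z‖⁻¹ • z - ‖v‖⁻¹ • v‖ = ‖(‖z‖⁻¹ - ‖v‖⁻¹) • z + ‖v‖⁻¹ • (z - v)‖ := by
        rw [smul_sub, sub_smul]; abel_nf
    _ ≤ ‖z - v‖ / ‖v‖ + ‖v‖⁻¹ * ‖z - v‖ := by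
        grw [norm_add_le, hradial, norm_smul, Real.norm_of_nonneg (by positivity)]
    _ = 2 * ‖z - v‖ / ‖v‖ := by ring

lemma mem_Ioo_smul_sphere_inter {t : Set E} {z : E} (hz : 0 < ‖z‖) (hz₁ : ‖z‖ < 1)
    (ht : ‖z‖⁻¹ • z ∈ t) : z ∈ Ioo (0 : ℝ) 1 • (Metric.sphere (0 : E) 1 ∩ t) :=
  Set.mem_smul.2 ⟨‖z‖, ⟨hz, hz₁⟩, ‖z‖⁻¹ • z, ⟨by simp [norm_smul, hz.ne'], ht⟩,
    by simp [smul_smul, hz.ne']⟩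

lemma smul_add_mem_Ioo_smul_sphere_inter_closedBall {u h : E} (hu : ‖u‖ = 1) {ρ s : ℝ}
    (hρ : ρ ≤ 1) (hs : s ∈ Icc (4⁻¹ : ℝ) 2⁻¹) (hh : ‖h‖ ≤ ρ / 8) :
    s • u + h ∈ Ioo (0 : ℝ) 1 • (Metric.sphere (0 : E) 1 ∩ Metric.closedBall u ρ) := by
  obtain ⟨hs₀, hs₁⟩ := hs
  have hsu : ‖s • u‖ = s := by rw [norm_smul, hu, mul_one, Real.norm_of_nonneg (by linarith)]
  have hlow : s - ‖h‖ ≤ ‖s • u + h‖ := by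
    simpa [hsu] using norm_sub_norm_le (s • u) (-h)
  have hup : ‖s • u + h‖ ≤ s + ‖h‖ := (norm_add_le _ _).trans_eq (by rw [hsu])
  refine mem_Ioo_smul_sphere_inter (by linarith) (by linarith) ?_
  have hdir : ‖s • u‖⁻¹ • (s • u) = u := by
    rw [hsu, smul_smul, inv_mul_cancel₀ (by linarith), one_smul]
  calc dist (‖s • u + h‖⁻¹ • (s • u + h)) u
        = ‖‖s • u + h‖⁻¹ • (s • u + h) - ‖s • u‖⁻¹ • (s • u)‖ := by rw [dist_eq_norm, hdir]
    _ ≤ 2 * ‖s • u + h - s • u‖ / ‖s • u‖ :=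
        norm_inv_norm_smul_sub_inv_norm_smul_le _ (norm_pos_iff.1 (by linarith))
    _ ≤ ρ := by
        rw [add_sub_cancel_left, hsu, div_le_iff₀ (by linarith)]
        nlinarith

end NormedSpace

lemma EuclideanSpace.norm_le_sqrt_card_mul {ι : Type*} [Fintype ι] {x : EuclideanSpace ℝ ι}
    {ε : ℝ} (hε : 0 ≤ ε) (hx : ∀ i, |x i| ≤ ε) : ‖x‖ ≤ √(Fintype.card ι) * ε := by
  rw [EuclideanSpace.norm_eq, ← Real.sqrt_sq hε, ← Real.sqrt_mul (Nat.cast_nonneg _)]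
  gcongr
  calc ∑ i, ‖x i‖ ^ 2 ≤ ∑ _i : ι, ε ^ 2 := by
        gcongr with i
        rw [Real.norm_eq_abs]
        exact hx i
    _ = _ := by simp

lemma EuclideanSpace.volume_preimage_ofLp_pi_update {m : ℕ} (i₀ : Fin m) (a b ε : ℝ) :
    volume (WithLp.ofLp ⁻¹' univ.pi (Function.update (fun _ ↦ Icc (-ε) ε) i₀ (Icc a b)) :
        Set (EuclideanSpace ℝ (Fin m))) =
      ENNReal.ofReal (b - a) * ENNReal.ofReal (2 * ε) ^ (m - 1) := by
  rw [(PiLp.volume_preserving_ofLp (Fin m)).measure_preimage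
      (MeasurableSet.univ_pi fun j ↦ by
        by_cases h : j = i₀ <;> simp [h]).nullMeasurableSet, volume_pi_pi]
  have hfactor (j : Fin m) : volume (Function.update (fun _ ↦ Icc (-ε) ε) i₀ (Icc a b) j) =
      Function.update (fun _ ↦ ENNReal.ofReal (2 * ε)) i₀ (ENNReal.ofReal (b - a)) j := by
    by_cases h : j = i₀ <;> simp [h, Real.volume_Icc, two_mul]
  simp [hfactor, Finset.prod_update_of_mem (Finset.mem_univ i₀), Finset.card_sdiff]

lemma EuclideanSpace.ne_zero_of_norm_eq_one {m : ℕ} {u : EuclideanSpace ℝ (Fin m)}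
    (hu : ‖u‖ = 1) : m ≠ 0 := by
  rintro rfl
  simp [Subsingleton.elim u 0] at hu

lemma EuclideanSpace.le_volume_Ioo_smul_sphere_inter_closedBall {m : ℕ}
    {u : EuclideanSpace ℝ (Fin m)} (hu : ‖u‖ = 1) {ρ : ℝ} (hρ₀ : 0 < ρ) (hρ : ρ ≤ 1) :
    ENNReal.ofReal (4⁻¹ * (ρ / (4 * √m)) ^ (m - 1)) ≤
      volume (Ioo (0 : ℝ) 1 • (Metric.sphere 0 1 ∩ Metric.closedBall u ρ)) := by
  have hm := EuclideanSpace.ne_zero_of_norm_eq_one hu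
  let i₀ : Fin m := ⟨0, Nat.pos_of_ne_zero hm⟩
  set e := EuclideanSpace.single i₀ (1 : ℝ)
  set ε := ρ / (8 * √m)
  set B : Set (EuclideanSpace ℝ (Fin m)) :=
    WithLp.ofLp ⁻¹' univ.pi (Function.update (fun _ ↦ Icc (-ε) ε) i₀ (Icc 4⁻¹ 2⁻¹))
  set R := (ℝ ∙ (e - u))ᗮ.reflection
  have hRe : R e = u := Submodule.reflection_sub (by simp [e, hu])
  have hB : R '' B ⊆ Ioo (0 : ℝ) 1 • (Metric.sphere 0 1 ∩ Metric.closedBall u ρ) := by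
    rintro _ ⟨v, hv, rfl⟩
    simp only [B, mem_preimage, mem_univ_pi] at hv
    have hv₀ : v i₀ ∈ Icc (4⁻¹ : ℝ) 2⁻¹ := by simpa using hv i₀
    have hperp : ‖v - v i₀ • e‖ ≤ ρ / 8 := by
      refine (EuclideanSpace.norm_le_sqrt_card_mul (ε := ε) (by positivity) fun j ↦ ?_).trans_eq ?_
      · by_cases h : j = i₀
        · simp only [h, e, PiLp.sub_apply, PiLp.smul_apply, PiLp.single_eq_same, smul_eq_mul,
            mul_one, sub_self, abs_zero]
          positivity
        · simpa [h, e, abs_le] using hv j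
      · have : 0 < √(m : ℝ) := by positivity
        simp only [Fintype.card_fin, ε]
        field_simp
    have := smul_add_mem_Ioo_smul_sphere_inter_closedBall hu hρ hv₀
      (h := R (v - v i₀ • e)) (by rwa [LinearIsometryEquiv.norm_map])
    rwa [map_sub, map_smul, hRe, add_sub_cancel] at this
  calc ENNReal.ofReal (4⁻¹ * (ρ / (4 * √m)) ^ (m - 1)) = volume B := by
        rw [EuclideanSpace.volume_preimage_ofLp_pi_update, ENNReal.ofReal_mul (by norm_num),
          ENNReal.ofReal_pow (by positivity)]
        congr 3
        · norm_num
        · simp only [ε]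
          field_simp
          ring
    _ = volume (R '' B) := by
        rw [R.image_eq_preimage_symm, R.symm.measurePreserving.measure_preimage_emb
          R.symm.toHomeomorph.measurableEmbedding]
    _ ≤ _ := measure_mono hB

lemma sphMeasure_apply {m : ℕ} (hm : m ≠ 0)
    {s : Set (Metric.sphere (0 : EuclideanSpace ℝ (Fin m)) 1)} (hs : MeasurableSet s) :
    sphMeasure m s = volume (Ioo (0 : ℝ) 1 • (((↑) : _ → EuclideanSpace ℝ (Fin m)) '' s)) /
      volume (Metric.ball (0 : EuclideanSpace ℝ (Fin m)) 1) := by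
  rw [sphMeasure, Measure.smul_apply, smul_eq_mul, Measure.toSphere_apply_univ,
    Measure.toSphere_apply' _ hs, finrank_euclideanSpace_fin, ← ENNReal.div_eq_inv_mul,
    ENNReal.mul_div_mul_left _ _ (by exact_mod_cast hm) (ENNReal.natCast_ne_top m)]

def sphCap (m : ℕ) (u : EuclideanSpace ℝ (Fin m)) (ρ : ℝ) :
    Set (Metric.sphere (0 : EuclideanSpace ℝ (Fin m)) 1) :=
  (↑) ⁻¹' Metric.closedBall u ρ

lemma measurableSet_sphCap (m : ℕ) (u : EuclideanSpace ℝ (Fin m)) (ρ : ℝ) :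
    MeasurableSet (sphCap m u ρ) :=
  measurableSet_closedBall.preimage measurable_subtype_coe

lemma exists_pos_ofReal_mul_pow_le_sphMeasure_sphCap {m : ℕ}
    {u : EuclideanSpace ℝ (Fin m)} (hu : ‖u‖ = 1) :
    ∃ c : ℝ, 0 < c ∧ ∀ ρ : ℝ, 0 < ρ → ρ ≤ 1 →
      ENNReal.ofReal (c * ρ ^ (m - 1)) ≤ sphMeasure m (sphCap m u ρ) := by
  have hm := EuclideanSpace.ne_zero_of_norm_eq_one hu
  set V := volume (Metric.ball (0 : EuclideanSpace ℝ (Fin m)) 1)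
  have hV₀ : V ≠ 0 := (Metric.measure_ball_pos _ _ one_pos).ne'
  have hV : 0 < V.toReal := ENNReal.toReal_pos hV₀ measure_ball_lt_top.ne
  refine ⟨V.toReal⁻¹ * (4⁻¹ * (4 * √m)⁻¹ ^ (m - 1)), by positivity, fun ρ hρ₀ hρ ↦ ?_⟩
  rw [sphMeasure_apply hm (measurableSet_sphCap m u ρ), sphCap, Subtype.image_preimage_coe]
  calc ENNReal.ofReal (V.toReal⁻¹ * (4⁻¹ * (4 * √m)⁻¹ ^ (m - 1)) * ρ ^ (m - 1))
      = ENNReal.ofReal (4⁻¹ * (ρ / (4 * √m)) ^ (m - 1)) / V := by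
        rw [ENNReal.div_eq_inv_mul, ← ENNReal.ofReal_toReal (ENNReal.inv_ne_top.2 hV₀),
          ← ENNReal.ofReal_mul (by positivity), ENNReal.toReal_inv]
        congr 1
        ring
    _ ≤ _ := by
        gcongr
        exact EuclideanSpace.le_volume_Ioo_smul_sphere_inter_closedBall hu hρ₀ hρ

lemma sphMeasure_le_sphAvg {m : ℕ} {f : Fin m → ℝ → ℝ} {t x : ℝ}
    {s : Set (Metric.sphere (0 : EuclideanSpace ℝ (Fin m)) 1)} (hs : MeasurableSet s)
    (hf : ∀ y ∈ s, ∀ i, 1 ≤ |f i (x - t * (y : EuclideanSpace ℝ (Fin m)) i)|) :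
    sphMeasure m s ≤ sphAvg m f t x := by
  rw [sphAvg, ← lintegral_indicator_one hs]
  refine lintegral_mono fun y ↦ ?_
  by_cases hy : y ∈ s
  · rw [indicator_of_mem hy, Pi.one_apply]
    exact Finset.one_le_prod' fun i _ ↦ ENNReal.one_le_ofReal.2 (hf y hy i)
  · simp [hy]

lemma abs_sub_mul_le_of_abs_sub_inv_le {a w δ x : ℝ} (ha : 0 < a) (hx₀ : 0 ≤ x) (hx : x ≤ 1)
    (hw : |w - a⁻¹| ≤ δ / a) : |x - x * a * w| ≤ δ := by
  have hδ : 0 ≤ δ := by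
    have := (abs_nonneg _).trans hw
    rwa [le_div_iff₀ ha, zero_mul] at this
  calc |x - x * a * w| = |x * a| * |w - a⁻¹| := by
        rw [← abs_mul, abs_sub_comm, mul_sub, mul_inv_cancel_right₀ ha.ne']
    _ ≤ x * a * (δ / a) := by rw [abs_of_nonneg (by positivity)]; gcongr
    _ = x * δ := by field_simp
    _ ≤ δ := mul_le_of_le_one_left hδ hx

/-- with `f₁ = ⋯ = f_m = χ_{[-δ,δ]}`, one has
`S^m(f₁,…,f_m)(x) ≳ δ^{m-1}` for `1/2 ≤ x ≤ 1`. -/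
theorem concentrated_lower_bound_a (m : ℕ) (hm : 2 ≤ m) :
    ∃ c : ℝ, 0 < c ∧ ∀ δ : ℝ, 0 < δ → δ ≤ 1 / 2 →
      ∀ x : ℝ, 1 / 2 ≤ x → x ≤ 1 →
        ENNReal.ofReal (c * δ ^ (m - 1)) ≤
          Sm m (fun _ => Set.indicator (Set.Icc (-δ) δ) 1) x := by
  have hsqrt : 0 < √(m : ℝ) := Real.sqrt_pos.2 (Nat.cast_pos.2 (by omega))
  set u : EuclideanSpace ℝ (Fin m) := WithLp.toLp 2 fun _ ↦ (√m)⁻¹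
  have hu : ‖u‖ = 1 := by
    simp [u, EuclideanSpace.norm_eq, hsqrt.ne']
  obtain ⟨c, hc, hcap⟩ := exists_pos_ofReal_mul_pow_le_sphMeasure_sphCap hu
  refine ⟨c * (√m)⁻¹ ^ (m - 1), by positivity, fun δ hδ₀ hδ x hx₀ hx ↦ ?_⟩
  have hcover : ∀ y ∈ sphCap m u (δ / √m), ∀ i,
      1 ≤ |indicator (Icc (-δ) δ) (1 : ℝ → ℝ) (x - x * √m * (y : EuclideanSpace ℝ (Fin m)) i)| := by
    intro y hy i
    have hyi : |(y : EuclideanSpace ℝ (Fin m)) i - (√m)⁻¹| ≤ δ / √m :=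
      (PiLp.norm_apply_le ((y : EuclideanSpace ℝ (Fin m)) - u) i).trans hy
    have hmem := abs_sub_mul_le_of_abs_sub_inv_le hsqrt (by linarith) hx hyi
    rw [indicator_of_mem (show _ ∈ Icc (-δ) δ from abs_le.1 hmem), Pi.one_apply, abs_one]
  calc ENNReal.ofReal (c * (√m)⁻¹ ^ (m - 1) * δ ^ (m - 1))
      = ENNReal.ofReal (c * (δ / √m) ^ (m - 1)) := by ring_nf
    _ ≤ sphMeasure m (sphCap m u (δ / √m)) :=
        hcap _ (by positivity) (by
          rw [div_le_one hsqrt]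
          linarith [Real.one_le_sqrt.2 (by exact_mod_cast (by omega : 1 ≤ m) : (1 : ℝ) ≤ m)])
    _ ≤ sphAvg m _ (x * √m) x :=
        sphMeasure_le_sphAvg (measurableSet_sphCap m u _) hcover
    _ ≤ _ := le_iSup₂ (f := fun t (_ : 0 < t) ↦ sphAvg m _ t x) _ (by positivity)
end

section
/- Let m ≥ 2. There is a constant c_m > 0, depending only on m, such that for every 0 < δ ≤ 1/2, taking f_1 = χ_{[−10√m, 10√m]} and f_2 = ⋯ = f_m = χ_{[−δ,δ]}, one has S^m(f_1,…,f_m)(x) ≥ c_m δ^{m−3/2} for every x with 1/2 ≤ x ≤ 1. -/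
open MeasureTheory Real Set
open scoped ENNReal NNReal

/-!
On the band of points `y` of the sphere with `y i ∈ [a(1-δ), a(1+δ)]` for all `i ≠ 0`, where
`a = 1/√(m-1)`, the radius `t = x/a` puts every `x - t y i` with `i ≠ 0` into `[-δ, δ]`, while
`|x - t y 0| ≤ 1 + √(m-1) ≤ 10√m` holds anyway; so `S^m` is at least the normalized measure of
the band. The cone over the band contains a parallelepiped of size `~ a` along the diagonal
`(0, 1, …, 1)`, width `~ δ` in the `m - 2` directions transversal to it inside `y 0 = 0`, and width
`~ √δ` in the direction `y 0`: the sphere is tangent to that direction, so `y 0 ^ 2 ≤ δ` moves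
the other coordinates only by `O(δ)`. Its volume `~ δ ^ (m - 2) * √δ` is the bound.
-/

open scoped Pointwise

theorem volume_preimage_shear {ι : Type*} [Fintype ι] [DecidableEq ι] {j : ι}
    {c : ι → ℝ} (hc : c j = 0) (s : Set (ι → ℝ)) :
    volume ((fun z => z + z j • c) ⁻¹' s) = volume s := by
  let M : Matrix ι ι ℝ :=
    1 + Matrix.replicateCol Unit c * Matrix.replicateRow Unit (Pi.single j (1 : ℝ))
  have hM : (fun z => z + z j • c) = Matrix.toLin' M := by
    ext z i
    simp [M, Matrix.mulVec, dotProduct, Matrix.mul_apply, Pi.single_apply, mul_comm]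
  have hdet : LinearMap.det (Matrix.toLin' M) = 1 := by
    rw [LinearMap.det_toLin', Matrix.det_one_add_replicateCol_mul_replicateRow,
      single_dotProduct, one_mul, hc, add_zero]
  rw [hM, Measure.addHaar_preimage_linearMap _ (by rw [hdet]; exact one_ne_zero), hdet]
  simp

theorem EuclideanSpace.volume_setOf_sub_mul_apply_mem {ι : Type*} [Fintype ι] [DecidableEq ι]
    {j : ι} {c : ι → ℝ} (hc : c j = 0) (I : ι → Set ℝ) :
    volume {z : EuclideanSpace ℝ ι | ∀ i, z i - c i * z j ∈ I i} = ∏ i, volume (I i) := by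
  have hset : {z : EuclideanSpace ℝ ι | ∀ i, z i - c i * z j ∈ I i} =
      (MeasurableEquiv.toLp 2 (ι → ℝ)).symm ⁻¹' ((fun z => z + z j • (-c)) ⁻¹' univ.pi I) := by
    ext z; simp [sub_eq_add_neg, mul_comm]
  rw [hset, (EuclideanSpace.volume_preserving_symm_measurableEquiv_toLp ι).measure_preimage_equiv,
    volume_preimage_shear (by simp [hc]), volume_pi_pi]

theorem mem_Ioo_smul_image_coe_preimage {E : Type*} [NormedAddCommGroup E] [NormedSpace ℝ E]
    {T : Set E} {z : E} (hz : z ≠ 0) (hz1 : ‖z‖ < 1) (hzT : ‖z‖⁻¹ • z ∈ T) :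
    z ∈ Ioo (0 : ℝ) 1 • ((↑) '' ((↑) ⁻¹' T : Set (Metric.sphere (0 : E) 1))) := by
  have hnorm : 0 < ‖z‖ := norm_pos_iff.2 hz
  have hsph : ‖z‖⁻¹ • z ∈ Metric.sphere (0 : E) 1 := by
    simp [norm_smul, hnorm.ne']
  exact ⟨‖z‖, ⟨hnorm, hz1⟩, ‖z‖⁻¹ • z, ⟨⟨_, hsph⟩, hzT, rfl⟩, smul_inv_smul₀ hnorm.ne' z⟩

theorem MeasureTheory.Measure.le_toSphere_of_subset {E : Type*} [NormedAddCommGroup E]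
    [NormedSpace ℝ E] [Nontrivial E] [FiniteDimensional ℝ E] [MeasurableSpace E] [BorelSpace E]
    (μ : Measure E) {s : Set (Metric.sphere (0 : E) 1)} (hs : MeasurableSet s) {P : Set E}
    (hP : P ⊆ Ioo (0 : ℝ) 1 • ((↑) '' s)) : μ P ≤ μ.toSphere s := by
  rw [μ.toSphere_apply' hs]
  refine (measure_mono hP).trans (le_mul_of_one_le_left zero_le ?_)
  exact_mod_cast Module.finrank_pos

theorem sphMeasure_le_Sm {m : ℕ} {f : Fin m → ℝ → ℝ} {t x : ℝ} (ht : 0 < t)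
    {A : Set (Metric.sphere (0 : EuclideanSpace ℝ (Fin m)) 1)} (hA : MeasurableSet A)
    (hf : ∀ y ∈ A, ∀ i, 1 ≤ |f i (x - t * (y : EuclideanSpace ℝ (Fin m)) i)|) :
    sphMeasure m A ≤ Sm m f x := by
  calc sphMeasure m A = ∫⁻ _ in A, 1 ∂sphMeasure m := (setLIntegral_one _).symm
    _ ≤ ∫⁻ y in A, ∏ i, ENNReal.ofReal |f i (x - t * (y : EuclideanSpace ℝ (Fin m)) i)|
          ∂sphMeasure m :=
      setLIntegral_mono' hA fun y hy =>
        Finset.one_le_prod' fun i _ => by simpa using ENNReal.ofReal_le_ofReal (hf y hy i)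
    _ ≤ sphAvg m f t x := setLIntegral_le_lintegral _ _
    _ ≤ Sm m f x := le_iSup₂ (f := fun t (_ : 0 < t) => sphAvg m f t x) t ht

theorem EuclideanSpace.norm_sq_bounds_of_forall_ne_zero {n : ℕ}
    (z : EuclideanSpace ℝ (Fin (n + 1))) {l u : ℝ} (hl : 0 ≤ l)
    (h : ∀ i ≠ 0, l ≤ z i ∧ z i ≤ u) :
    z 0 ^ 2 + n * l ^ 2 ≤ ‖z‖ ^ 2 ∧ ‖z‖ ^ 2 ≤ z 0 ^ 2 + n * u ^ 2 := by
  have hz : ∀ i : Fin n, l ^ 2 ≤ z i.succ ^ 2 ∧ z i.succ ^ 2 ≤ u ^ 2 := fun i => by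
    obtain ⟨hli, hui⟩ := h i.succ (Fin.succ_ne_zero i)
    exact ⟨pow_le_pow_left₀ hl hli 2, pow_le_pow_left₀ (hl.trans hli) hui 2⟩
  rw [EuclideanSpace.real_norm_sq_eq, Fin.sum_univ_succ]
  constructor
  · simpa using Finset.card_nsmul_le_sum Finset.univ _ _ fun i _ => (hz i).1
  · simpa using Finset.sum_le_card_nsmul Finset.univ _ _ fun i _ => (hz i).2

theorem ratio_bounds_of_sq_bounds {n a δ q N : ℝ} (ha : 0 < a) (han : a ^ 2 * n = 1) (hn : 1 ≤ n)
    (hδ : 0 < δ) (hδ2 : δ ≤ 1 / 2) (hq : 0 < q) (hN : 0 ≤ N) (hlow : n * q ^ 2 ≤ N ^ 2)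
    (hupp : N ^ 2 ≤ q ^ 2 * (δ + n * (1 + δ / 4) ^ 2)) :
    a * (1 - δ) * N ≤ q ∧ q * (1 + δ / 4) ≤ a * (1 + δ) * N := by
  have haδ : a ^ 2 * δ ≤ δ := mul_le_of_le_one_left hδ.le (by nlinarith)
  have hq_le : q ≤ a * N := abs_le_of_sq_le_sq' (by nlinarith) (by positivity) |>.2
  refine ⟨abs_le_of_sq_le_sq' ?_ hq.le |>.2, by nlinarith⟩
  calc (a * (1 - δ) * N) ^ 2 = a ^ 2 * (1 - δ) ^ 2 * N ^ 2 := by ring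
    _ ≤ a ^ 2 * (1 - δ) ^ 2 * (q ^ 2 * (δ + n * (1 + δ / 4) ^ 2)) := by gcongr
    _ = (1 - δ) ^ 2 * (a ^ 2 * δ + (1 + δ / 4) ^ 2) * q ^ 2 := by
      linear_combination (1 - δ) ^ 2 * q ^ 2 * (1 + δ / 4) ^ 2 * han
    _ ≤ (1 - δ) ^ 2 * (1 + 2 * δ) * q ^ 2 := by gcongr (1 - δ) ^ 2 * ?_ * q ^ 2; nlinarith
    _ = (1 - δ ^ 2 * (3 - 2 * δ)) * q ^ 2 := by ring
    _ ≤ q ^ 2 := mul_le_of_le_one_left (sq_nonneg q) (by nlinarith)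

def band (n : ℕ) (a δ : ℝ) : Set (EuclideanSpace ℝ (Fin (n + 1))) :=
  {y | ∀ i ≠ 0, y i ∈ Icc (a * (1 - δ)) (a * (1 + δ))}

theorem isClosed_band (n : ℕ) (a δ : ℝ) : IsClosed (band n a δ) := by
  simp only [band, ofPred_forall]
  exact isClosed_iInter fun i => isClosed_iInter fun _ => isClosed_Icc.preimage (by fun_prop)

theorem inv_norm_smul_mem_band {n : ℕ} {a δ q : ℝ} (ha : 0 < a) (han : a ^ 2 * n = 1)
    (hδ : 0 < δ) (hδ2 : δ ≤ 1 / 2) (hq : 0 < q) {z : EuclideanSpace ℝ (Fin (n + 1))}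
    (h0 : z 0 ^ 2 ≤ δ * q ^ 2) (h : ∀ i ≠ 0, q ≤ z i ∧ z i ≤ q * (1 + δ / 4)) :
    ‖z‖⁻¹ • z ∈ band n a δ := by
  have hn : (1 : ℝ) ≤ n := by
    have : n ≠ 0 := by rintro rfl; simp at han
    exact_mod_cast Nat.one_le_iff_ne_zero.2 this
  obtain ⟨hlow, hupp⟩ := EuclideanSpace.norm_sq_bounds_of_forall_ne_zero z hq.le h
  obtain ⟨hlow', hupp'⟩ := ratio_bounds_of_sq_bounds ha han hn hδ hδ2 hq (norm_nonneg z)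
    (by nlinarith [sq_nonneg (z 0)]) (by linarith)
  have hz : 0 < ‖z‖ := by nlinarith [sq_nonneg (z 0), norm_nonneg z]
  intro i hi
  rw [PiLp.smul_apply, smul_eq_mul, inv_mul_eq_div, mem_Icc, le_div_iff₀ hz, div_le_iff₀ hz]
  exact ⟨hlow'.trans (h i hi).1, (h i hi).2.trans hupp'⟩

def shearedBox (k : ℕ) (a δ : ℝ) : Set (EuclideanSpace ℝ (Fin (k + 2))) :=
  {z | z 0 ∈ Ioo 0 (a / 2 * √δ) ∧ z 1 ∈ Ioo (a / 2) (3 * a / 4) ∧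
    ∀ i : Fin k, z i.succ.succ - z 1 ∈ Ioo 0 (a * δ / 8)}

theorem volume_shearedBox (k : ℕ) {a δ : ℝ} (ha : 0 ≤ a) (hδ : 0 < δ) :
    volume (shearedBox k a δ) =
      ENNReal.ofReal (a ^ (k + 2) / (8 * 8 ^ k) * δ ^ ((k : ℝ) + 1 / 2)) := by
  have hset : shearedBox k a δ = {z : EuclideanSpace ℝ (Fin (k + 2)) |
      ∀ i, z i - (Fin.cons 0 (Fin.cons 0 1) : Fin (k + 2) → ℝ) i * z 1 ∈
        (Fin.cons (Ioo 0 (a / 2 * √δ)) (Fin.cons (Ioo (a / 2) (3 * a / 4))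
          fun _ => Ioo 0 (a * δ / 8)) : Fin (k + 2) → Set ℝ) i} := by
    ext z
    simp [shearedBox, Fin.forall_fin_succ]
  rw [hset, EuclideanSpace.volume_setOf_sub_mul_apply_mem (by rfl)]
  simp only [Fin.prod_univ_succ, Fin.cons_zero, Fin.cons_succ, Finset.prod_const,
    Finset.card_univ, Fintype.card_fin, Real.volume_Ioo]
  rw [sub_zero, sub_zero, show 3 * a / 4 - a / 2 = a / 4 by ring,
    ← ENNReal.ofReal_pow (by positivity), ← ENNReal.ofReal_mul (by positivity),
    ← ENNReal.ofReal_mul (by positivity), Real.rpow_add hδ, Real.rpow_natCast,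
    ← Real.sqrt_eq_rpow]
  congr 1
  rw [div_pow, mul_pow]
  field_simp
  ring

theorem shearedBox_subset {k : ℕ} {a δ : ℝ} (ha : 0 < a) (hak : a ^ 2 * (k + 1 : ℕ) = 1)
    (hδ : 0 < δ) (hδ2 : δ ≤ 1 / 2) :
    shearedBox k a δ ⊆ Ioo (0 : ℝ) 1 • ((↑) '' ((↑) ⁻¹' band (k + 1) a δ :
      Set (Metric.sphere (0 : EuclideanSpace ℝ (Fin (k + 2))) 1))) := by
  rintro z ⟨⟨h0, h0'⟩, ⟨h1, h1'⟩, hrest⟩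
  set q := z 1
  have hq : 0 < q := (half_pos ha).trans h1
  have hz0 : z 0 ^ 2 ≤ δ * q ^ 2 := by
    have : z 0 ≤ q * √δ := h0'.le.trans (by gcongr)
    nlinarith [Real.sq_sqrt hδ.le, Real.sqrt_nonneg δ]
  have hcoord : ∀ i ≠ 0, q ≤ z i ∧ z i ≤ q * (1 + δ / 4) := by
    intro i hi
    obtain ⟨j, rfl⟩ := Fin.exists_succ_eq.2 hi
    cases j using Fin.cases with
    | zero => exact ⟨le_rfl, le_mul_of_one_le_right hq.le (by linarith)⟩
    | succ j =>
      obtain ⟨hj, hj'⟩ := hrest j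
      constructor <;> nlinarith
  obtain ⟨-, hupp⟩ := EuclideanSpace.norm_sq_bounds_of_forall_ne_zero z hq.le hcoord
  have hz : ‖z‖ < 1 := by
    have haδ : a ^ 2 * δ ≤ δ := mul_le_of_le_one_left hδ.le (by push_cast at hak; nlinarith)
    refine (sq_lt_one_iff₀ (norm_nonneg z)).1 ?_
    calc ‖z‖ ^ 2 ≤ q ^ 2 * (δ + (k + 1 : ℕ) * (1 + δ / 4) ^ 2) := by linarith
      _ ≤ (3 * a / 4) ^ 2 * (δ + (k + 1 : ℕ) * (1 + δ / 4) ^ 2) := by gcongr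
      _ = 9 / 16 * (a ^ 2 * δ + (1 + δ / 4) ^ 2) := by
        linear_combination 9 / 16 * (1 + δ / 4) ^ 2 * hak
      _ < 1 := by nlinarith
  refine mem_Ioo_smul_image_coe_preimage ?_ hz
    (inv_norm_smul_mem_band ha hak hδ hδ2 hq hz0 hcoord)
  exact fun h => hq.ne' (by simp [q, h])

theorem abs_sub_div_mul_le {a δ x y : ℝ} (ha : 0 < a) (hx : 0 ≤ x) (hx1 : x ≤ 1)
    (hy : y ∈ Icc (a * (1 - δ)) (a * (1 + δ))) : |x - x / a * y| ≤ δ := by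
  have hδ : 0 ≤ δ := by nlinarith [hy.1.trans hy.2]
  have hay : |a - y| ≤ a * δ := abs_le.2 ⟨by linarith [hy.2], by linarith [hy.1]⟩
  calc |x - x / a * y| = x / a * |a - y| := by
        rw [show x - x / a * y = x / a * (a - y) by field_simp, abs_mul,
          abs_of_nonneg (by positivity)]
    _ ≤ x / a * (a * δ) := by gcongr
    _ = x * δ := by field_simp
    _ ≤ δ := mul_le_of_le_one_left hδ hx1

theorem abs_sub_mul_apply_le_of_mem_sphere {ι : Type*} [Fintype ι] {x t : ℝ}
    {y : EuclideanSpace ℝ ι} (hy : y ∈ Metric.sphere 0 1) (ht : 0 ≤ t) (i : ι) :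
    |x - t * y i| ≤ |x| + t := by
  have : |y i| ≤ 1 := by simpa using (PiLp.norm_apply_le y i).trans_eq (by simpa using hy)
  calc |x - t * y i| ≤ |x| + t * |y i| := by
        simpa [abs_mul, abs_of_nonneg ht] using abs_sub x (t * y i)
    _ ≤ |x| + t := by gcongr; exact mul_le_of_le_one_right ht this

theorem one_le_abs_indicator_of_mem_band {k : ℕ} {δ x : ℝ} (hx : 0 < x) (hx1 : x ≤ 1)
    {y : EuclideanSpace ℝ (Fin (k + 2))} (hy : y ∈ Metric.sphere 0 1)
    (hyb : y ∈ band (k + 1) (√(k + 1 : ℕ))⁻¹ δ) (i : Fin (k + 2)) :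
    (1 : ℝ) ≤ |(if (i : ℕ) = 0 then (Icc (-(10 * √(k + 2 : ℕ))) (10 * √(k + 2 : ℕ))).indicator 1
      else (Icc (-δ) δ).indicator 1) (x - x * √(k + 1 : ℕ) * y i)| := by
  split_ifs with hi
  · rw [indicator_of_mem, Pi.one_apply, abs_one]
    have hs : √(k + 1 : ℕ) ≤ √(k + 2 : ℕ) := Real.sqrt_le_sqrt (by simp)
    have hs1 : 1 ≤ √(k + 2 : ℕ) := Real.one_le_sqrt.2 (Nat.one_le_cast.2 (by omega))
    refine abs_le.1 ((abs_sub_mul_apply_le_of_mem_sphere hy (by positivity) i).trans ?_)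
    rw [abs_of_pos hx]
    nlinarith
  · rw [← div_inv_eq_mul x, indicator_of_mem, Pi.one_apply, abs_one]
    exact abs_le.1
      (abs_sub_div_mul_le (by positivity) hx.le hx1 (hyb i fun h => hi (by simp [h])))

noncomputable def bandConst (k : ℕ) : ℝ :=
  (√(k + 1 : ℕ))⁻¹ ^ (k + 2) / (8 * 8 ^ k) *
    ((volume : Measure (EuclideanSpace ℝ (Fin (k + 2)))).toSphere univ)⁻¹.toReal

theorem toSphere_univ_ne_zero (k : ℕ) :
    (volume : Measure (EuclideanSpace ℝ (Fin (k + 2)))).toSphere univ ≠ 0 :=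
  Measure.measure_univ_ne_zero.2 (by simp)

theorem bandConst_pos (k : ℕ) : 0 < bandConst k := by
  have := ENNReal.toReal_pos (ENNReal.inv_ne_zero.2 (measure_ne_top _ _))
    (ENNReal.inv_ne_top.2 (toSphere_univ_ne_zero k))
  unfold bandConst
  positivity

theorem bandConst_mul_le_sphMeasure_band (k : ℕ) {δ : ℝ} (hδ : 0 < δ) (hδ2 : δ ≤ 1 / 2) :
    ENNReal.ofReal (bandConst k * δ ^ ((k : ℝ) + 1 / 2)) ≤
      sphMeasure (k + 2) ((↑) ⁻¹' band (k + 1) (√(k + 1 : ℕ))⁻¹ δ) := by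
  set a : ℝ := (√(k + 1 : ℕ))⁻¹
  have ha : 0 < a := by positivity
  have hak : a ^ 2 * (k + 1 : ℕ) = 1 := by
    rw [inv_pow, Real.sq_sqrt (by positivity), inv_mul_cancel₀ (by positivity)]
  set B := (volume : Measure (EuclideanSpace ℝ (Fin (k + 2)))).toSphere univ
  have hband : MeasurableSet
      ((↑) ⁻¹' band (k + 1) a δ : Set (Metric.sphere (0 : EuclideanSpace ℝ (Fin (k + 2))) 1)) :=
    (isClosed_band (k + 1) a δ).measurableSet.preimage measurable_subtype_coe
  calc ENNReal.ofReal (bandConst k * δ ^ ((k : ℝ) + 1 / 2))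
      = B⁻¹ * volume (shearedBox k a δ) := by
        rw [bandConst, volume_shearedBox k ha.le hδ, mul_right_comm,
          ENNReal.ofReal_mul (by positivity),
          ENNReal.ofReal_toReal (ENNReal.inv_ne_top.2 (toSphere_univ_ne_zero k)), mul_comm]
    _ ≤ B⁻¹ * (volume : Measure (EuclideanSpace ℝ (Fin (k + 2)))).toSphere
          ((↑) ⁻¹' band (k + 1) a δ) := by
        gcongr
        exact Measure.le_toSphere_of_subset _ hband (shearedBox_subset ha hak hδ hδ2)

/-- with `f₁ = χ_{[-10√m,10√m]}` and `f₂ = ⋯ = f_m = χ_{[-δ,δ]}`, one has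
`S^m(f₁,…,f_m)(x) ≳ δ^{m-3/2}` for `1/2 ≤ x ≤ 1`. -/
theorem concentrated_lower_bound_b (m : ℕ) (hm : 2 ≤ m) :
    ∃ c : ℝ, 0 < c ∧ ∀ δ : ℝ, 0 < δ → δ ≤ 1 / 2 →
      ∀ x : ℝ, 1 / 2 ≤ x → x ≤ 1 →
        ENNReal.ofReal (c * δ ^ ((m : ℝ) - 3 / 2)) ≤
          Sm m (fun i =>
            if (i : ℕ) = 0 then
              Set.indicator (Set.Icc (-(10 * Real.sqrt m)) (10 * Real.sqrt m)) 1
            else Set.indicator (Set.Icc (-δ) δ) 1) x := by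
  obtain ⟨k, rfl⟩ : ∃ k, m = k + 2 := ⟨m - 2, by omega⟩
  refine ⟨bandConst k, bandConst_pos k, fun δ hδ hδ2 x hx hx1 => ?_⟩
  have hx0 : 0 < x := by linarith
  rw [show ((k + 2 : ℕ) : ℝ) - 3 / 2 = k + 1 / 2 by push_cast; ring]
  refine (bandConst_mul_le_sphMeasure_band k hδ hδ2).trans ?_
  refine sphMeasure_le_Sm (t := x * √(k + 1 : ℕ)) (by positivity)
    ((isClosed_band _ _ _).measurableSet.preimage measurable_subtype_coe) fun y hy i => ?_
  exact one_le_abs_indicator_of_mem_band hx0 hx1 y.2 hy i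
end
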